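/- arXiv:1805.05996 — 3 statements merged into one kernel-verified Lean document; each statement's English description precedes it below -/
import Mathlib

section
/- If G is a Δ-critical simple graph, then for any edge xy ∈ E(G), the vertex y is adjacent to at least Δ − d(x) + 1 vertices z of degree Δ with z ≠ x. -/
open Finset

variable {V : Type*}

def IsEdgeColoring (G : SimpleGraph V) (k : ℕ) (φ : V → V → ℕ) : Prop :=
  (∀ u v, φ u v = φ v u) ∧
  (∀ ⦃u v⦄, G.Adj u v → φ u v ∈ Finset.Icc 1 k) ∧
  (∀ ⦃v a b⦄, G.Adj v a → G.Adj v b → a ≠ b → φ v a ≠ φ v b)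

noncomputable def chromIndex (G : SimpleGraph V) : ℕ :=
  sInf {k | ∃ φ : V → V → ℕ, IsEdgeColoring G k φ}

def IsDeltaCritical [Fintype V] (G : SimpleGraph V) [DecidableRel G.Adj] : Prop :=
  G.Connected ∧ chromIndex G = G.maxDegree + 1 ∧
    ∀ e ∈ G.edgeSet, chromIndex (G.deleteEdges {e}) = G.maxDegree

noncomputable def indepNum [Fintype V] (G : SimpleGraph V) : ℕ :=
  sSup {n | ∃ s : Finset V, (∀ u ∈ s, ∀ v ∈ s, u ≠ v → ¬ G.Adj u v) ∧ s.card = n}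

/-!
Colour `G - xy` with `Δ` colours, so that `xy` is the only uncoloured edge. Call a sequence
`x = v₀, v₁, …, vₘ` of distinct neighbours of `y` a fan if the colour of `y vⱼ₊₁` is missing at `vⱼ`.
Shifting the colours along a fan shows that no colour is missing both at `y` and at the last vertex
of a fan, since it would complete a `Δ`-colouring of `G`. Let `δ` be missing at `y`. If `γ` is
missing at the last vertex `u` of a fan, then `u` lies on the `(δ, γ)`-Kempe chain through `y`
(otherwise swapping `δ` and `γ` on the chain of `u` makes `δ` missing at `y` and at the end of a
fan); as this chain is a path starting at `y`, the last vertices of two fans miss no common colour.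
Hence the sets of colours missing at the fan ends `F` are disjoint, and each of their colours is the
colour of an edge from `y` to `F \ {x}`; so `∑_{v ∈ F} |missing(v)| ≤ |F| - 1`. Since `x` misses at
least `Δ - d(x) + 1` colours and every other `v ∈ F` with `d(v) < Δ` misses at least one, at least
`Δ - d(x) + 1` vertices of `F \ {x}` have degree `Δ`.
-/

open Function

lemma Equiv.swap_mem_iff {α : Type*} [DecidableEq α] {s : Finset α} {a b x : α} (ha : a ∈ s)
    (hb : b ∈ s) : Equiv.swap a b x ∈ s ↔ x ∈ s := by
  rw [Equiv.swap_apply_def]; split_ifs <;> simp_all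

theorem List.exists_eq_append_of_not_isChain {α : Type*} {R : α → α → Prop} {l : List α}
    (h : ¬ l.IsChain R) :
    ∃ l₁ p q l₂, l = l₁ ++ p :: q :: l₂ ∧ (l₁ ++ [p]).IsChain R ∧ ¬ R p q := by
  induction l with
  | nil => simp at h
  | cons a t ih =>
    cases t with
    | nil => simp at h
    | cons b t =>
      by_cases hab : R a b
      · obtain ⟨l₁, p, q, l₂, he, hch, hpq⟩ := ih fun ht ↦ h (ht.cons_cons hab)
        refine ⟨a :: l₁, p, q, l₂, by rw [he, List.cons_append], ?_, hpq⟩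
        cases l₁ <;> simp_all
      · exact ⟨[], a, b, t, rfl, .singleton a, hab⟩

theorem Finset.le_card_filter_eq_zero {α : Type*} {s : Finset α} {f : α → ℕ} {m : ℕ}
    (h : m + ∑ x ∈ s, f x ≤ #s) : m ≤ #(s.filter (f · = 0)) := by
  have hpos : #(s.filter (¬ f · = 0)) ≤ ∑ x ∈ s, f x :=
    calc #(s.filter (¬ f · = 0)) = ∑ x ∈ s.filter (¬ f · = 0), 1 := card_eq_sum_ones _
      _ ≤ ∑ x ∈ s.filter (¬ f · = 0), f x :=
        sum_le_sum fun x hx ↦ Nat.one_le_iff_ne_zero.2 (mem_filter.1 hx).2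
      _ ≤ ∑ x ∈ s, f x := sum_le_sum_of_subset (filter_subset _ _)
  have := card_filter_add_card_filter_not (s := s) (fun x ↦ f x = 0)
  omega

lemma not_isEdgeColoring_of_lt_chromIndex {H : SimpleGraph V} {k : ℕ} (h : k < chromIndex H)
    (φ : V → V → ℕ) : ¬ IsEdgeColoring H k φ :=
  fun hφ ↦ (Nat.sInf_le (show k ∈ {k | ∃ φ, IsEdgeColoring H k φ} from ⟨φ, hφ⟩)).not_gt h

lemma exists_isEdgeColoring_of_chromIndex_eq {H : SimpleGraph V} {k : ℕ} (h : chromIndex H = k)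
    (hk : k ≠ 0) : ∃ φ, IsEdgeColoring H k φ := by
  have hne : {k | ∃ φ, IsEdgeColoring H k φ}.Nonempty := by
    by_contra he
    rw [Set.not_nonempty_iff_eq_empty] at he
    exact hk (by rw [← h, chromIndex, he, Nat.sInf_empty])
  exact h ▸ Nat.sInf_mem hne

namespace SimpleGraph

variable {G : SimpleGraph V} {k : ℕ} {c c' : Sym2 V → ℕ} {a b u v w z : V} {i δ γ : ℕ}
  {L L₁ L₂ l₁ l₂ : List V} {s : Set V}

theorem Connected.eq_of_degree_le_one [Fintype V] [DecidableRel G.Adj] (hG : G.Connected)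
    (h2 : ∀ v, G.degree v ≤ 2) {x u w : V} (hx : G.degree x ≤ 1) (hu : G.degree u ≤ 1)
    (hw : G.degree w ≤ 1) (hxu : x ≠ u) (hxw : x ≠ w) : u = w := by
  classical
  by_contra huw
  set T : Finset V := {x, u, w}
  have hT : #T = 3 := card_eq_three.2 ⟨x, u, w, hxu, hxw, huw, rfl⟩
  have hsum : ∑ v, G.degree v + #T ≤ 2 * Fintype.card V := by
    have hle : ∀ v, G.degree v + (if v ∈ T then 1 else 0) ≤ 2 := by
      intro v
      split_ifs with hv
      · simp only [T, mem_insert, mem_singleton] at hv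
        rcases hv with rfl | rfl | rfl <;> omega
      · exact (h2 v).trans (by omega)
    calc ∑ v, G.degree v + #T = ∑ v, (G.degree v + if v ∈ T then 1 else 0) := by
          rw [sum_add_distrib, sum_boole]; simp
      _ ≤ ∑ _v : V, 2 := sum_le_sum fun v _ ↦ hle v
      _ = 2 * Fintype.card V := by rw [sum_const, card_univ, smul_eq_mul, mul_comm]
  have hconn := hG.card_vert_le_card_edgeSet_add_one
  rw [Nat.card_eq_fintype_card, Nat.card_eq_fintype_card, ← edgeFinset_card] at hconn
  have := G.sum_degrees_eq_twice_card_edges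
  omega

theorem Reachable.eq_of_degree_le_one [Fintype V] [DecidableRel G.Adj]
    (h2 : ∀ v, G.degree v ≤ 2) {x u w : V} (hx : G.degree x ≤ 1) (hu : G.degree u ≤ 1)
    (hw : G.degree w ≤ 1) (hxu : x ≠ u) (hxw : x ≠ w) (hxu' : G.Reachable x u)
    (hxw' : G.Reachable x w) : u = w := by
  classical
  set C := G.connectedComponentMk x
  have hdeg : ∀ v (hv : v ∈ C), C.toSimpleGraph.degree ⟨v, hv⟩ ≤ G.degree v := by
    intro v hv
    rw [← card_neighborFinset_eq_degree, ← card_neighborFinset_eq_degree]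
    refine card_le_card_of_injOn Subtype.val (fun u hu ↦ ?_) Subtype.val_injective.injOn
    rw [mem_coe, mem_neighborFinset] at hu ⊢
    exact hu
  have hmem : ∀ {v}, G.Reachable x v → v ∈ C := fun h ↦ ConnectedComponent.sound h.symm
  have := C.connected_toSimpleGraph.eq_of_degree_le_one (x := ⟨x, rfl⟩) (u := ⟨u, hmem hxu'⟩)
    (w := ⟨w, hmem hxw'⟩) (fun v ↦ (hdeg v v.2).trans (h2 v)) ((hdeg _ _).trans hx)
    ((hdeg _ _).trans hu) ((hdeg _ _).trans hw) (fun h ↦ hxu (congrArg Subtype.val h))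
    (fun h ↦ hxw (congrArg Subtype.val h))
  simpa using this

/-- `c` colours the edges of `G` properly with `1, …, k`, except for the edge `s(a, b)`, which
carries the dummy colour `0`. -/
structure IsColoringExcept (G : SimpleGraph V) (k : ℕ) (c : Sym2 V → ℕ) (a b : V) : Prop where
  apply_hole : c s(a, b) = 0
  mem_Icc : ∀ ⦃u v⦄, G.Adj u v → s(u, v) ≠ s(a, b) → c s(u, v) ∈ Icc 1 k
  injOn : ∀ v, Set.InjOn (fun u ↦ c s(v, u)) (G.neighborSet v)

def IsMissing (G : SimpleGraph V) (k : ℕ) (c : Sym2 V → ℕ) (v : V) (i : ℕ) : Prop :=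
  i ∈ Icc 1 k ∧ ∀ u, G.Adj v u → c s(v, u) ≠ i

lemma IsMissing.ne_zero (h : G.IsMissing k c v i) : i ≠ 0 := by
  have := (Finset.mem_Icc.1 h.1).1; omega

lemma isMissing_congr (h : ∀ u, G.Adj v u → c' s(v, u) = c s(v, u)) :
    G.IsMissing k c' v i ↔ G.IsMissing k c v i :=
  and_congr_right' <| forall₂_congr fun u hu ↦ by rw [h u hu]

lemma IsColoringExcept.apply_ne_zero (hc : G.IsColoringExcept k c a b) (huv : G.Adj u v)
    (hne : s(u, v) ≠ s(a, b)) : c s(u, v) ≠ 0 := by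
  have := (Finset.mem_Icc.1 (hc.mem_Icc huv hne)).1; omega

lemma IsColoringExcept.isEdgeColoring_update [DecidableEq V] (hc : G.IsColoringExcept k c a b)
    (ha : G.IsMissing k c a i) (hb : G.IsMissing k c b i) :
    IsEdgeColoring G k fun u v ↦ update c s(a, b) i s(u, v) := by
  have missing_at_hole : ∀ ⦃v u w⦄, s(v, u) = s(a, b) → G.Adj v w → c s(v, w) ≠ i := by
    intro v u w h hvw
    obtain rfl | rfl := Sym2.mem_iff.1 (h ▸ Sym2.mem_mk_left v u)
    exacts [ha.2 w hvw, hb.2 w hvw]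
  refine ⟨fun u v ↦ congrArg (update c s(a, b) i) Sym2.eq_swap, fun u v huv ↦ ?_,
    fun v u w hu hw huw h ↦ ?_⟩
  · by_cases h : s(u, v) = s(a, b)
    · simpa [h] using ha.1
    · simpa [h] using hc.mem_Icc huv h
  · by_cases hvu : s(v, u) = s(a, b) <;> by_cases hvw : s(v, w) = s(a, b)
    · exact huw (Sym2.congr_right.1 (hvu.trans hvw.symm))
    · simp only [hvu, hvw, update_self, ne_eq, not_false_eq_true, update_of_ne] at h
      exact missing_at_hole hvu hw h.symm
    · simp only [hvu, hvw, update_self, ne_eq, not_false_eq_true, update_of_ne] at h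
      exact missing_at_hole hvw hu h
    · simp only [hvu, hvw, ne_eq, not_false_eq_true, update_of_ne] at h
      exact huw (hc.injOn v hu hw h)

lemma IsColoringExcept.not_isMissing_and (hG : ∀ φ, ¬ IsEdgeColoring G k φ)
    (hc : G.IsColoringExcept k c a b) : ¬ (G.IsMissing k c a i ∧ G.IsMissing k c b i) := by
  classical
  exact fun ⟨ha, hb⟩ ↦ hG _ (hc.isEdgeColoring_update ha hb)

lemma _root_.IsEdgeColoring.isColoringExcept [DecidableEq V] {φ : V → V → ℕ}
    (hφ : IsEdgeColoring (G.deleteEdges {s(a, b)}) k φ) :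
    G.IsColoringExcept k (Function.update (Sym2.lift ⟨φ, hφ.1⟩) s(a, b) 0) a b := by
  have hφ_apply : ∀ ⦃u v⦄, s(u, v) ≠ s(a, b) →
      Function.update (Sym2.lift ⟨φ, hφ.1⟩) s(a, b) 0 s(u, v) = φ u v := fun u v h ↦ by
    simp [h]
  have hadj : ∀ ⦃u v⦄, G.Adj u v → s(u, v) ≠ s(a, b) → (G.deleteEdges {s(a, b)}).Adj u v :=
    fun u v huv h ↦ deleteEdges_adj.2 ⟨huv, h⟩
  refine ⟨by simp, fun u v huv h ↦ hφ_apply h ▸ hφ.2.1 (hadj huv h), fun v u hu w hw h ↦ ?_⟩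
  simp only at h
  by_cases hu' : s(v, u) = s(a, b) <;> by_cases hw' : s(v, w) = s(a, b)
  · exact Sym2.congr_right.1 (hu'.trans hw'.symm)
  · rw [hu', Function.update_self, hφ_apply hw'] at h
    exact absurd (h ▸ hφ.2.1 (hadj hw hw')) (by simp)
  · rw [hw', Function.update_self, hφ_apply hu'] at h
    exact absurd (h ▸ hφ.2.1 (hadj hu hu')) (by simp)
  · rw [hφ_apply hu', hφ_apply hw'] at h
    by_contra huw
    exact hφ.2.2 (hadj hu hu') (hadj hw hw') huw h

/-- Recolour `s(a, b)` with the colour of `s(a, z)` and make `s(a, z)` the hole. -/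
def rotateHole [DecidableEq V] (c : Sym2 V → ℕ) (a b z : V) : Sym2 V → ℕ :=
  c ∘ Equiv.swap s(a, b) s(a, z)

section rotateHole

variable [DecidableEq V]

lemma rotateHole_apply_left : rotateHole c a b z s(a, u) = c s(a, Equiv.swap b z u) := by
  simp only [rotateHole, comp_apply, Equiv.swap_apply_def, Sym2.congr_right]
  split_ifs <;> rfl

lemma rotateHole_apply_of_ne_of_ne (hv : v ≠ a) (hu : u ≠ a) :
    rotateHole c a b z s(v, u) = c s(v, u) :=
  congrArg c <| Equiv.swap_apply_of_ne_of_ne (by simp [hv, hu])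
    (by simp [hv, hu])

lemma adj_swap (hab : G.Adj a b) (haz : G.Adj a z) (hau : G.Adj a u) :
    G.Adj a (Equiv.swap b z u) := by
  rw [Equiv.swap_apply_def]; split_ifs <;> assumption

lemma IsColoringExcept.rotateHole (hc : G.IsColoringExcept k c a b) (hab : G.Adj a b)
    (haz : G.Adj a z) (hlink : G.IsMissing k c b (c s(a, z))) :
    G.IsColoringExcept k (SimpleGraph.rotateHole c a b z) a z where
  apply_hole := by simpa [SimpleGraph.rotateHole] using hc.apply_hole
  mem_Icc u v huv hne := by
    by_cases hab' : s(u, v) = s(a, b)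
    · simpa [SimpleGraph.rotateHole, hab'] using hlink.1
    · simpa [SimpleGraph.rotateHole, Equiv.swap_apply_of_ne_of_ne hab' hne] using
        hc.mem_Icc huv hab'
  injOn v := by
    rcases eq_or_ne v a with rfl | hva
    · simp only [rotateHole_apply_left]
      refine (hc.injOn v).comp (Equiv.injective _).injOn fun u hu ↦ adj_swap hab haz hu
    have hv_hole : G.Adj v a → ∀ w, G.Adj v w → w ≠ a →
        SimpleGraph.rotateHole c a b z s(v, a) ≠ c s(v, w) := by
      intro hav w hvw hwa
      rw [Sym2.eq_swap, rotateHole_apply_left]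
      by_cases hvb : v = b
      · subst hvb; simpa using (hlink.2 w hvw).symm
      by_cases hvz : v = z
      · subst hvz
        simpa [hc.apply_hole] using (hc.apply_ne_zero hvw (by simp [hva, hvb])).symm
      · rw [Equiv.swap_apply_of_ne_of_ne hvb hvz, Sym2.eq_swap]
        exact fun h ↦ hwa (hc.injOn v hav hvw h).symm
    intro u hu w hw h
    simp only at h
    by_cases hua : u = a <;> by_cases hwa : w = a
    · exact hua.trans hwa.symm
    · rw [hua, rotateHole_apply_of_ne_of_ne hva hwa] at h
      exact (hv_hole (hua ▸ hu) w hw hwa h).elim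
    · rw [hwa, rotateHole_apply_of_ne_of_ne hva hua] at h
      exact (hv_hole (hwa ▸ hw) u hu hua h.symm).elim
    · rw [rotateHole_apply_of_ne_of_ne hva hua, rotateHole_apply_of_ne_of_ne hva hwa] at h
      exact hc.injOn v hu hw h

lemma IsMissing.rotateHole (h : G.IsMissing k c v i) (hc : G.IsColoringExcept k c a b)
    (hvb : v ≠ b) (hab : G.Adj a b) (haz : G.Adj a z) :
    G.IsMissing k (SimpleGraph.rotateHole c a b z) v i := by
  refine ⟨h.1, fun u hvu ↦ ?_⟩
  rcases eq_or_ne v a with rfl | hva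
  · rw [rotateHole_apply_left]
    exact h.2 _ (adj_swap hab haz hvu)
  rcases eq_or_ne u a with rfl | hua
  · rw [Sym2.eq_swap, rotateHole_apply_left]
    by_cases hvz : v = z
    · simpa [hvz, hc.apply_hole] using h.ne_zero.symm
    · rw [Equiv.swap_apply_of_ne_of_ne hvb hvz, Sym2.eq_swap]
      exact h.2 u hvu
  · rw [rotateHole_apply_of_ne_of_ne hva hua]
    exact h.2 u hvu

end rotateHole

/-- A fan at `a` for the hole `s(a, b)`: distinct neighbours `b = v₀, v₁, …, vₘ` of `a` such that
the colour of `s(a, vⱼ₊₁)` is missing at `vⱼ`. -/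
structure IsFan (G : SimpleGraph V) (k : ℕ) (c : Sym2 V → ℕ) (a b : V) (L : List V) : Prop where
  head?_eq : L.head? = some b
  nodup : L.Nodup
  adj : ∀ v ∈ L, G.Adj a v
  isChain : L.IsChain fun p q ↦ G.IsMissing k c p (c s(a, q))

lemma IsFan.prefix (hL : G.IsFan k c a b (l₁ ++ v :: l₂)) : G.IsFan k c a b (l₁ ++ [v]) where
  head?_eq := by cases l₁ <;> simpa using hL.head?_eq
  nodup := hL.nodup.sublist (by simp)
  adj w hw := hL.adj w (by simp only [List.mem_append, List.mem_cons] at hw ⊢; tauto)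
  isChain := (List.isChain_split.1 hL.isChain).1

lemma IsFan.concat (hL : G.IsFan k c a b L) (hu : L.getLast? = some u) (hw : w ∉ L)
    (haw : G.Adj a w) (hlink : G.IsMissing k c u (c s(a, w))) : G.IsFan k c a b (L ++ [w]) where
  head?_eq := by
    cases L with
    | nil => simp at hu
    | cons x L => simpa using hL.head?_eq
  nodup := by simpa [List.nodup_append, hL.nodup] using fun x hx (h : x = w) ↦ hw (h ▸ hx)
  adj v hv := by
    rcases List.mem_append.1 hv with hv | hv
    exacts [hL.adj v hv, List.mem_singleton.1 hv ▸ haw]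
  isChain := List.isChain_append.2 ⟨hL.isChain, .singleton w, by simp [hu, hlink]⟩

/-- Rotating the hole along the fan to its last vertex `u` keeps the colours missing at `a` and
at `u`, so a colour missing at both would complete the colouring. -/
theorem IsFan.not_isMissing_getLast (hG : ∀ φ, ¬ IsEdgeColoring G k φ)
    (hc : G.IsColoringExcept k c a b) (hL : G.IsFan k c a b L) (hu : L.getLast? = some u)
    (ha : G.IsMissing k c a i) : ¬ G.IsMissing k c u i := by
  classical
  induction L generalizing b c with
  | nil => simp at hu
  | cons b' L ih =>
    obtain rfl : b' = b := by simpa using hL.head?_eq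
    cases L with
    | nil =>
      obtain rfl : b' = u := by simpa using hu
      exact fun hu ↦ hc.not_isMissing_and hG ⟨ha, hu⟩
    | cons z L =>
      have hab := hL.adj b' (by simp)
      have haz := hL.adj z (by simp)
      have hne : ∀ v ∈ z :: L, v ≠ b' := fun v hv h ↦ (List.nodup_cons.1 hL.nodup).1 (h ▸ hv)
      have hzL : z ∉ L := (List.nodup_cons.1 hL.nodup.of_cons).1
      obtain ⟨hlink, hchain⟩ := List.isChain_cons_cons.1 hL.isChain
      have hL' : G.IsFan k (rotateHole c a b' z) a z (z :: L) := by
        refine ⟨rfl, hL.nodup.of_cons, fun v hv ↦ hL.adj v (by simp [hv]), ?_⟩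
        refine hchain.imp_of_mem_tail_imp fun p q hp hq hpq ↦ ?_
        have hq : q ∈ L := by simpa using hq
        rw [rotateHole_apply_left, Equiv.swap_apply_of_ne_of_ne (hne q (by simp [hq]))
          (fun h : q = z ↦ hzL (h ▸ hq))]
        exact hpq.rotateHole hc (hne p hp) hab haz
      have hu' : u ∈ z :: L := List.mem_of_getLast? (List.getLast?_cons_cons ▸ hu)
      exact fun hui ↦ ih (hc.rotateHole hab haz hlink) hL' (by simpa using hu)
        (ha.rotateHole hc (G.ne_of_adj hab) hab haz) (hui.rotateHole hc (hne u hu') hab haz)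

def kempeGraph (G : SimpleGraph V) (c : Sym2 V → ℕ) (δ γ : ℕ) : SimpleGraph V where
  Adj u v := G.Adj u v ∧ (c s(u, v) = δ ∨ c s(u, v) = γ)
  symm := ⟨fun u v h ↦ by rwa [Sym2.eq_swap, G.adj_comm]⟩
  loopless := ⟨fun v h ↦ G.loopless.irrefl v h.1⟩

@[simp]
lemma kempeGraph_adj :
    (G.kempeGraph c δ γ).Adj u v ↔ G.Adj u v ∧ (c s(u, v) = δ ∨ c s(u, v) = γ) :=
  Iff.rfl

instance [DecidableRel G.Adj] : DecidableRel (G.kempeGraph c δ γ).Adj :=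
  fun _ _ ↦ decidable_of_iff' _ kempeGraph_adj

section degree

variable [Fintype V] [DecidableRel G.Adj]

lemma degree_kempeGraph_le
    (hinj : Set.InjOn (fun u ↦ c s(v, u)) (G.neighborSet v)) {T : Finset ℕ}
    (hT : ∀ u, (G.kempeGraph c δ γ).Adj v u → c s(v, u) ∈ T) :
    (G.kempeGraph c δ γ).degree v ≤ #T := by
  rw [← card_neighborFinset_eq_degree]
  refine card_le_card_of_injOn _ (fun u hu ↦ hT u ?_) (hinj.mono fun u hu ↦ ?_)
  · simpa using hu
  · simp only [coe_neighborFinset, mem_neighborSet, kempeGraph_adj] at hu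
    exact hu.1

lemma degree_kempeGraph_le_two (hinj : Set.InjOn (fun u ↦ c s(v, u)) (G.neighborSet v)) :
    (G.kempeGraph c δ γ).degree v ≤ 2 := by
  classical
  exact (degree_kempeGraph_le hinj (T := {δ, γ}) fun u hu ↦ by simpa using hu.2).trans card_le_two

lemma degree_kempeGraph_le_one (hinj : Set.InjOn (fun u ↦ c s(v, u)) (G.neighborSet v))
    (hv : G.IsMissing k c v δ ∨ G.IsMissing k c v γ) : (G.kempeGraph c δ γ).degree v ≤ 1 := by
  rcases hv with hv | hv
  · exact degree_kempeGraph_le hinj (T := {γ}) fun u hu ↦ by simpa [hv.2 u hu.1] using hu.2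
  · exact degree_kempeGraph_le hinj (T := {δ}) fun u hu ↦ by simpa [hv.2 u hu.1] using hu.2

end degree

open Classical in
noncomputable def kempeSwap (c : Sym2 V → ℕ) (δ γ : ℕ) (s : Set V) : Sym2 V → ℕ :=
  fun e ↦ if ∃ v ∈ e, v ∈ s then Equiv.swap δ γ (c e) else c e

lemma kempeSwap_apply_of_mem (hv : v ∈ s) :
    kempeSwap c δ γ s s(v, u) = Equiv.swap δ γ (c s(v, u)) :=
  if_pos ⟨v, Sym2.mem_mk_left v u, hv⟩

lemma kempeSwap_apply_of_notMem (hs : ∀ ⦃u v⦄, (G.kempeGraph c δ γ).Adj u v → u ∈ s → v ∈ s)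
    (hv : v ∉ s) (hvu : G.Adj v u) : kempeSwap c δ γ s s(v, u) = c s(v, u) := by
  unfold kempeSwap
  split_ifs with h
  · obtain ⟨w, hw, hws⟩ := h
    obtain rfl | rfl := Sym2.mem_iff.1 hw
    · exact absurd hws hv
    · refine Equiv.swap_apply_of_ne_of_ne (fun h ↦ hv (hs (kempeGraph_adj.2 ⟨hvu.symm, ?_⟩) hws))
        (fun h ↦ hv (hs (kempeGraph_adj.2 ⟨hvu.symm, ?_⟩) hws)) <;> simp [Sym2.eq_swap, h]
  · rfl

lemma IsColoringExcept.kempeSwap (hc : G.IsColoringExcept k c a b) (hδ : δ ∈ Icc 1 k)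
    (hγ : γ ∈ Icc 1 k) (hs : ∀ ⦃u v⦄, (G.kempeGraph c δ γ).Adj u v → u ∈ s → v ∈ s) :
    G.IsColoringExcept k (SimpleGraph.kempeSwap c δ γ s) a b where
  apply_hole := by
    have hδ0 : 0 ≠ δ := by grind
    have hγ0 : 0 ≠ γ := by grind
    unfold SimpleGraph.kempeSwap
    split_ifs <;> simp [hc.apply_hole, Equiv.swap_apply_of_ne_of_ne hδ0 hγ0]
  mem_Icc u v huv hne := by
    unfold SimpleGraph.kempeSwap
    split_ifs
    exacts [(Equiv.swap_mem_iff hδ hγ).2 (hc.mem_Icc huv hne), hc.mem_Icc huv hne]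
  injOn v := by
    by_cases hv : v ∈ s
    · simp only [kempeSwap_apply_of_mem hv]
      exact (Equiv.injective _).comp_injOn (hc.injOn v)
    · exact (hc.injOn v).congr fun u hu ↦ (kempeSwap_apply_of_notMem hs hv hu).symm

lemma isMissing_kempeSwap_of_mem (hδ : δ ∈ Icc 1 k) (hγ : γ ∈ Icc 1 k) (hv : v ∈ s) :
    G.IsMissing k (kempeSwap c δ γ s) v i ↔ G.IsMissing k c v (Equiv.swap δ γ i) := by
  simp only [IsMissing, kempeSwap_apply_of_mem hv, Equiv.swap_mem_iff hδ hγ, ne_eq,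
    Equiv.swap_apply_eq_iff]

lemma isMissing_kempeSwap_of_notMem
    (hs : ∀ ⦃u v⦄, (G.kempeGraph c δ γ).Adj u v → u ∈ s → v ∈ s) (hv : v ∉ s) :
    G.IsMissing k (kempeSwap c δ γ s) v i ↔ G.IsMissing k c v i :=
  isMissing_congr fun _ hu ↦ kempeSwap_apply_of_notMem hs hv hu

theorem IsFan.reachable_of_isMissing (hG : ∀ φ, ¬ IsEdgeColoring G k φ)
    (hc : G.IsColoringExcept k c a b) (hδ : G.IsMissing k c a δ) (hL : G.IsFan k c a b L)
    (hu : L.getLast? = some u) (hγ : G.IsMissing k c u γ) :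
    (G.kempeGraph c δ γ).Reachable a u := by
  by_contra hau
  set s := {v | (G.kempeGraph c δ γ).Reachable u v}
  have hs : ∀ ⦃v w⦄, (G.kempeGraph c δ γ).Adj v w → v ∈ s → w ∈ s :=
    fun v w hvw hv ↦ Reachable.trans hv hvw.reachable
  have has : a ∉ s := fun h ↦ hau h.symm
  have hc' := hc.kempeSwap hδ.1 hγ.1 hs
  have hδ' := (isMissing_kempeSwap_of_notMem hs has).2 hδ
  have key : ∀ L' w, G.IsFan k (kempeSwap c δ γ s) a b L' → L'.getLast? = some w → w ∈ s →
      G.IsMissing k c w γ → False := fun L' w hL' hw hws hγw ↦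
    hL'.not_isMissing_getLast hG hc' hw hδ'
      ((isMissing_kempeSwap_of_mem hδ.1 hγ.1 hws).2 (by rwa [Equiv.swap_apply_left]))
  by_cases hch : L.IsChain fun p q ↦ G.IsMissing k (kempeSwap c δ γ s) p (kempeSwap c δ γ s s(a, q))
  · exact key L u { hL with isChain := hch } hu Reachable.rfl hγ
  obtain ⟨l₁, z, z', l₂, rfl, hpre, hbroken⟩ := List.exists_eq_append_of_not_isChain hch
  have hlink := (List.isChain_append_cons_cons.1 hL.isChain).2.1
  have haz' : G.Adj a z' := hL.adj z' (by simp)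
  rw [kempeSwap_apply_of_notMem hs has haz'] at hbroken
  have hzs : z ∈ s := by
    by_contra hzs
    exact hbroken ((isMissing_kempeSwap_of_notMem hs hzs).2 hlink)
  rw [isMissing_kempeSwap_of_mem hδ.1 hγ.1 hzs] at hbroken
  have hcol : c s(a, z') = γ := by
    by_contra hne
    exact hbroken (by rwa [Equiv.swap_apply_of_ne_of_ne (hδ.2 z' haz') hne])
  exact key _ z { hL.prefix with isChain := hpre } List.getLast?_concat hzs (hcol ▸ hlink)

theorem IsFan.eq_of_isMissing [Fintype V] [DecidableRel G.Adj]
    (hG : ∀ φ, ¬ IsEdgeColoring G k φ) (hc : G.IsColoringExcept k c a b)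
    (hδ : G.IsMissing k c a δ) (h₁ : G.IsFan k c a b L₁) (h₂ : G.IsFan k c a b L₂)
    (hu₁ : L₁.getLast? = some u) (hu₂ : L₂.getLast? = some v) (hγ₁ : G.IsMissing k c u γ)
    (hγ₂ : G.IsMissing k c v γ) : u = v := by
  have hau := G.ne_of_adj (h₁.adj u (List.mem_of_getLast? hu₁))
  have hav := G.ne_of_adj (h₂.adj v (List.mem_of_getLast? hu₂))
  refine Reachable.eq_of_degree_le_one (fun w ↦ degree_kempeGraph_le_two (hc.injOn w))
    (degree_kempeGraph_le_one (hc.injOn a) (.inl hδ))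
    (degree_kempeGraph_le_one (hc.injOn u) (.inr hγ₁))
    (degree_kempeGraph_le_one (hc.injOn v) (.inr hγ₂)) hau hav
    (h₁.reachable_of_isMissing hG hc hδ hu₁ hγ₁) (h₂.reachable_of_isMissing hG hc hδ hu₂ hγ₂)

def missingColors (G : SimpleGraph V) [Fintype V] [DecidableRel G.Adj] (k : ℕ)
    (c : Sym2 V → ℕ) (v : V) : Finset ℕ :=
  Icc 1 k \ (G.neighborFinset v).image fun u ↦ c s(v, u)

open Classical in
noncomputable def fanEnds [Fintype V] (G : SimpleGraph V) (k : ℕ) (c : Sym2 V → ℕ) (a b : V) :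
    Finset V :=
  {v | ∃ L, G.IsFan k c a b L ∧ L.getLast? = some v}

section missingColors

variable [Fintype V] [DecidableRel G.Adj]

lemma mem_missingColors : i ∈ G.missingColors k c v ↔ G.IsMissing k c v i := by
  simp [missingColors, IsMissing]

lemma card_missingColors :
    #(G.missingColors k c v) = k - #(((G.neighborFinset v).image fun u ↦ c s(v, u)) ∩ Icc 1 k) := by
  rw [missingColors, card_sdiff, Nat.card_Icc, Nat.add_sub_cancel]

lemma le_card_missingColors_add_degree : k ≤ #(G.missingColors k c v) + G.degree v := by
  have : #(((G.neighborFinset v).image fun u ↦ c s(v, u)) ∩ Icc 1 k) ≤ G.degree v :=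
    (card_le_card inter_subset_left).trans
      (card_image_le.trans (card_neighborFinset_eq_degree G v).le)
  rw [card_missingColors]
  omega

lemma lt_card_missingColors_add_degree (hvu : G.Adj v u) (h₀ : c s(v, u) = 0) :
    k < #(G.missingColors k c v) + G.degree v := by
  have h₀mem : 0 ∈ (G.neighborFinset v).image fun u ↦ c s(v, u) :=
    mem_image.2 ⟨u, by simpa using hvu, h₀⟩
  have hlt : #(((G.neighborFinset v).image fun u ↦ c s(v, u)) ∩ Icc 1 k) <
      #((G.neighborFinset v).image fun u ↦ c s(v, u)) :=
    card_lt_card ⟨inter_subset_left, fun h ↦ by simpa using (mem_inter.1 (h h₀mem)).2⟩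
  have : #((G.neighborFinset v).image fun u ↦ c s(v, u)) ≤ G.degree v :=
    card_image_le.trans (card_neighborFinset_eq_degree G v).le
  rw [card_missingColors]
  omega

lemma exists_isMissing (hvu : G.Adj v u) (h₀ : c s(v, u) = 0) (hdeg : G.degree v ≤ k) :
    ∃ i, G.IsMissing k c v i := by
  have := lt_card_missingColors_add_degree (k := k) hvu h₀
  obtain ⟨i, hi⟩ := card_pos.1 (show 0 < #(G.missingColors k c v) by omega)
  exact ⟨i, mem_missingColors.1 hi⟩

lemma degree_eq_maxDegree_of_card_missingColors_eq_zero
    (h : #(G.missingColors G.maxDegree c v) = 0) : G.degree v = G.maxDegree := by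
  have := le_card_missingColors_add_degree (G := G) (k := G.maxDegree) (c := c) (v := v)
  have := G.degree_le_maxDegree v
  omega

end missingColors

section fanEnds

variable [Fintype V]

lemma mem_fanEnds : v ∈ G.fanEnds k c a b ↔ ∃ L, G.IsFan k c a b L ∧ L.getLast? = some v := by
  simp [fanEnds]

lemma self_mem_fanEnds (hab : G.Adj a b) : b ∈ G.fanEnds k c a b :=
  mem_fanEnds.2 ⟨[b], ⟨rfl, List.nodup_singleton b, by simpa using hab, .singleton b⟩, rfl⟩

lemma adj_of_mem_fanEnds (hv : v ∈ G.fanEnds k c a b) : G.Adj a v := by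
  obtain ⟨L, hL, hv⟩ := mem_fanEnds.1 hv
  exact hL.adj v (List.mem_of_getLast? hv)

variable [DecidableEq V]

lemma exists_mem_fanEnds_of_isMissing (hG : ∀ φ, ¬ IsEdgeColoring G k φ)
    (hc : G.IsColoringExcept k c a b) (hv : v ∈ G.fanEnds k c a b) (hi : G.IsMissing k c v i) :
    ∃ w ∈ (G.fanEnds k c a b).erase b, c s(a, w) = i := by
  obtain ⟨L, hL, hLv⟩ := mem_fanEnds.1 hv
  obtain ⟨w, haw, hw⟩ : ∃ w, G.Adj a w ∧ c s(a, w) = i := by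
    by_contra! h
    exact hL.not_isMissing_getLast hG hc hLv ⟨hi.1, h⟩ hi
  have hwb : w ≠ b := by
    rintro rfl
    exact hi.ne_zero (hw ▸ hc.apply_hole)
  refine ⟨w, mem_erase.2 ⟨hwb, mem_fanEnds.2 ?_⟩, hw⟩
  by_cases hwL : w ∈ L
  · obtain ⟨l₁, l₂, rfl⟩ := List.mem_iff_append.1 hwL
    exact ⟨l₁ ++ [w], hL.prefix, List.getLast?_concat⟩
  · exact ⟨L ++ [w], hL.concat hLv hwL haw (hw ▸ hi), List.getLast?_concat⟩

theorem sum_card_missingColors_fanEnds_le [DecidableRel G.Adj] (hG : ∀ φ, ¬ IsEdgeColoring G k φ)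
    (hc : G.IsColoringExcept k c a b) (hδ : G.IsMissing k c a δ) :
    ∑ v ∈ G.fanEnds k c a b, #(G.missingColors k c v) ≤ #((G.fanEnds k c a b).erase b) := by
  set F := G.fanEnds k c a b
  have hdisj : (F : Set V).PairwiseDisjoint (G.missingColors k c) := by
    intro u hu v hv huv
    refine Finset.disjoint_left.2 fun i hiu hiv ↦ huv ?_
    obtain ⟨L₁, h₁, hu₁⟩ := mem_fanEnds.1 hu
    obtain ⟨L₂, h₂, hu₂⟩ := mem_fanEnds.1 hv
    exact h₁.eq_of_isMissing hG hc hδ h₂ hu₁ hu₂ (mem_missingColors.1 hiu)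
      (mem_missingColors.1 hiv)
  have hsub : F.biUnion (G.missingColors k c) ⊆ (F.erase b).image fun w ↦ c s(a, w) := by
    intro i hi
    obtain ⟨v, hv, hiv⟩ := mem_biUnion.1 hi
    obtain ⟨w, hw, rfl⟩ := exists_mem_fanEnds_of_isMissing hG hc hv (mem_missingColors.1 hiv)
    exact mem_image_of_mem _ hw
  rw [← card_biUnion hdisj]
  exact (card_le_card hsub).trans card_image_le

end fanEnds

section IsDeltaCritical

variable [Fintype V] [DecidableRel G.Adj]

lemma _root_.IsDeltaCritical.not_isEdgeColoring (hG : IsDeltaCritical G) (φ : V → V → ℕ) :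
    ¬ IsEdgeColoring G G.maxDegree φ :=
  not_isEdgeColoring_of_lt_chromIndex (by rw [hG.2.1]; omega) φ

lemma _root_.IsDeltaCritical.exists_isColoringExcept [DecidableEq V] (hG : IsDeltaCritical G)
    (hab : G.Adj a b) : ∃ c, G.IsColoringExcept G.maxDegree c a b := by
  have hΔ : G.maxDegree ≠ 0 :=
    (((G.degree_pos_iff_exists_adj a).2 ⟨b, hab⟩).trans_le (G.degree_le_maxDegree a)).ne'
  obtain ⟨φ, hφ⟩ := exists_isEdgeColoring_of_chromIndex_eq (hG.2.2 _ (G.mem_edgeSet.2 hab)) hΔ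
  exact ⟨_, hφ.isColoringExcept⟩

end IsDeltaCritical

end SimpleGraph

/-- Vizing's Adjacency Lemma: if `G` is a `Δ`-critical simple graph, then for any edge
`xy ∈ E(G)`, the vertex `y` is adjacent to at least `Δ - d(x) + 1` vertices `z` of degree `Δ`
with `z ≠ x`. -/
theorem statement5 {V : Type*} [Fintype V] [DecidableEq V]
    (G : SimpleGraph V) [DecidableRel G.Adj] (hG : IsDeltaCritical G)
    {x y : V} (hxy : G.Adj x y) :
    G.maxDegree - G.degree x + 1 ≤
      ((G.neighborFinset y).filter fun z => z ≠ x ∧ G.degree z = G.maxDegree).card := by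
  obtain ⟨c, hc⟩ := hG.exists_isColoringExcept hxy.symm
  obtain ⟨δ, hδ⟩ := SimpleGraph.exists_isMissing hxy.symm hc.apply_hole (G.degree_le_maxDegree y)
  set F := G.fanEnds G.maxDegree c y x
  have hsum := SimpleGraph.sum_card_missingColors_fanEnds_le hG.not_isEdgeColoring hc hδ
  rw [← add_sum_erase F _ (SimpleGraph.self_mem_fanEnds hxy.symm)] at hsum
  have hx := SimpleGraph.lt_card_missingColors_add_degree (k := G.maxDegree) hxy
    (Sym2.eq_swap ▸ hc.apply_hole)
  have := G.degree_le_maxDegree x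
  calc G.maxDegree - G.degree x + 1 ≤ #(G.missingColors G.maxDegree c x) := by omega
    _ ≤ #((F.erase x).filter fun v ↦ #(G.missingColors G.maxDegree c v) = 0) :=
      le_card_filter_eq_zero hsum
    _ ≤ _ := card_le_card fun v hv ↦ by
      obtain ⟨⟨hvx, hvF⟩, hv₀⟩ := (mem_filter.1 hv).imp_left mem_erase.1
      exact mem_filter.2 ⟨(G.mem_neighborFinset y v).2 (SimpleGraph.adj_of_mem_fanEnds hvF), hvx,
        SimpleGraph.degree_eq_maxDegree_of_card_missingColors_eq_zero hv₀⟩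
end

section
/- With the discharging setup below, for each x ∈ X^{++} ∪ X^+ one has M₂*(x) ≥ (d+2)Δ = M₂(x). -/
open Finset

variable {V : Type*}

noncomputable section

open scoped Classical

variable [Fintype V]

/-- `g₁(k) = (d+2)(Δ-k)/k`. -/
def g1 (d : ℕ) (Δ k : ℝ) : ℝ := ((d : ℝ) + 2) * (Δ - k) / k

/-- The set `X⁺ = {x ∈ X : q ≤ d(x) < Δ}`. -/
def Xp (G : SimpleGraph V) [DecidableRel G.Adj] (q : ℝ) (X : Finset V) : Finset V :=
  X.filter fun x => q ≤ (G.degree x : ℝ) ∧ G.degree x < G.maxDegree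

/-- The set `X⁻ = {x ∈ X : d ≤ d(x) < q}`. -/
def Xm (G : SimpleGraph V) [DecidableRel G.Adj] (d : ℕ) (q : ℝ) (X : Finset V) : Finset V :=
  X.filter fun x => d ≤ G.degree x ∧ (G.degree x : ℝ) < q

/-- The charge `M₁*(y)` of a vertex `y ∈ Y` after Step 1 of the discharging rule: starting
from `M₁(y) = ωΔ`, the vertex `y` gives charge `g₁(d(x))` to each `x ∈ N(y) ∩ X⁺`. -/
def M1star (G : SimpleGraph V) [DecidableRel G.Adj] (d : ℕ) (ω q : ℝ) (X : Finset V)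
    (y : V) : ℝ :=
  ω * G.maxDegree -
    ∑ x ∈ G.neighborFinset y ∩ Xp G q X, g1 d (G.maxDegree : ℝ) (G.degree x : ℝ)

/-- The charge that `y ∈ Y` gives to each vertex of `N(y) ∩ X⁻` in Step 2 of the discharging
rule: if `M₁*(y) > 0`, then `y` distributes its remaining charge equally among all vertices
(if any) of `N(y) ∩ X⁻`. -/
def step2 (G : SimpleGraph V) [DecidableRel G.Adj] (d : ℕ) (ω q : ℝ) (X : Finset V)
    (y : V) : ℝ :=
  if 0 < M1star G d ω q X y ∧ (G.neighborFinset y ∩ Xm G d q X).Nonempty then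
    M1star G d ω q X y / ((G.neighborFinset y ∩ Xm G d q X).card : ℝ)
  else 0

/-- The final charge `M₂*(y)` of a vertex `y ∈ Y`. -/
def M2starY (G : SimpleGraph V) [DecidableRel G.Adj] (d : ℕ) (ω q : ℝ) (X : Finset V)
    (y : V) : ℝ :=
  M1star G d ω q X y - ((G.neighborFinset y ∩ Xm G d q X).card : ℝ) * step2 G d ω q X y

/-- The final charge `M₂*(x)` of a vertex `x ∈ X`: starting from `M₁(x) = (d+2)d(x)`,
`x` receives `g₁(d(x))` from each neighbor `y ∈ Y` in Step 1 if `x ∈ X⁺`, and receives the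
Step-2 charge from each neighbor `y ∈ Y` if `x ∈ X⁻`. -/
def M2starX (G : SimpleGraph V) [DecidableRel G.Adj] (d : ℕ) (ω q : ℝ) (X : Finset V)
    (x : V) : ℝ :=
  ((d : ℝ) + 2) * G.degree x +
    (if x ∈ Xp G q X then
      ∑ y ∈ (G.neighborFinset x).filter (· ∉ X), g1 d (G.maxDegree : ℝ) (G.degree x : ℝ)
    else 0) +
    (if x ∈ Xm G d q X then
      ∑ y ∈ (G.neighborFinset x).filter (· ∉ X), step2 G d ω q X y
    else 0)

/-- `σ_q(x,z) = |{u ∈ N(z) - {x} : d(u) ≥ q}|`. -/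
def sigmaq (G : SimpleGraph V) [DecidableRel G.Adj] (q : ℝ) (x z : V) : ℕ :=
  ((G.neighborFinset z).filter fun u => u ≠ x ∧ q ≤ (G.degree u : ℝ)).card

end

variable [Fintype V]

section Discharging

variable (G : SimpleGraph V) [DecidableRel G.Adj] (d : ℕ) (ω q : ℝ) (X : Finset V)

theorem step2_nonneg (y : V) : 0 ≤ step2 G d ω q X y := by
  unfold step2
  split_ifs with h
  · exact div_nonneg h.1.le (Nat.cast_nonneg _)
  · exact le_rfl

variable {G d ω q X}

theorem notMem_Xm_of_mem_Xp {x : V} (hx : x ∈ Xp G q X) : x ∉ Xm G d q X := by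
  simp only [Xp, Xm, mem_filter] at hx ⊢
  rintro ⟨-, -, hlt⟩
  linarith [hx.2.1]

theorem g1_nonneg {Δ k : ℝ} (hk : 0 ≤ k) (hkΔ : k ≤ Δ) : 0 ≤ g1 d Δ k :=
  div_nonneg (mul_nonneg (by positivity) (sub_nonneg.mpr hkΔ)) hk

theorem degree_mul_le_M2starX (x : V) : ((d : ℝ) + 2) * G.degree x ≤ M2starX G d ω q X x := by
  unfold M2starX
  refine le_add_of_le_of_nonneg (le_add_of_nonneg_right ?_) ?_ <;> split_ifs with h
  · refine sum_nonneg fun _ _ => g1_nonneg (Nat.cast_nonneg _) ?_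
    exact_mod_cast (mem_filter.mp h).2.2.le
  · exact le_rfl
  · exact sum_nonneg fun y _ => step2_nonneg G d ω q X y
  · exact le_rfl

/-- Every neighbour of `x ∈ X⁺` lies in `Y`, and the `d(x)` payments of `g₁(d(x))` top the
charge `(d+2)d(x)` up to exactly `(d+2)Δ`. -/
theorem M2starX_eq_of_mem_Xp (hXind : ∀ u ∈ X, ∀ v ∈ X, u ≠ v → ¬ G.Adj u v) {x : V}
    (hx : x ∈ Xp G q X) (hpos : 0 < G.degree x) :
    M2starX G d ω q X x = ((d : ℝ) + 2) * G.maxDegree := by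
  have hxX : x ∈ X := (mem_filter.mp hx).1
  have hN : ∀ y ∈ G.neighborFinset x, y ∉ X := fun y hy hyX =>
    have hxy := (G.mem_neighborFinset x y).mp hy
    hXind x hxX y hyX (G.ne_of_adj hxy) hxy
  have hk : (G.degree x : ℝ) ≠ 0 := by exact_mod_cast hpos.ne'
  unfold M2starX
  rw [if_pos hx, if_neg (notMem_Xm_of_mem_Xp hx)]
  classical
  simp only [filter_true_of_mem hN, sum_const, G.card_neighborFinset_eq_degree, nsmul_eq_mul, g1]
  field_simp
  ring

end Discharging

theorem statement15_general (G : SimpleGraph V) [DecidableRel G.Adj]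
    (d : ℕ) (hd : d = 3 ∨ d = 4 ∨ 19 ≤ d)
    (hmin : ∀ v : V, d ≤ G.degree v)
    (X : Finset V) (hXind : ∀ u ∈ X, ∀ v ∈ X, u ≠ v → ¬ G.Adj u v)
    (ω : ℝ)
    (q : ℝ)
    (x : V) (hx : x ∈ X)
    (hdeg : G.degree x = G.maxDegree ∨ (q ≤ (G.degree x : ℝ) ∧ G.degree x < G.maxDegree)) :
    ((d : ℝ) + 2) * G.maxDegree ≤ M2starX G d ω q X x := by
  rcases hdeg with hmaxdeg | hXp
  · rw [← hmaxdeg]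
    exact degree_mul_le_M2starX x
  · have hpos : 0 < G.degree x := lt_of_lt_of_le (by omega) (hmin x)
    exact (M2starX_eq_of_mem_Xp hXind (mem_filter.mpr ⟨hx, hXp⟩) hpos).ge

/-- Discharging setup as in the paper. For each `x ∈ X⁺⁺ ∪ X⁺` one has
`M₂*(x) ≥ (d+2)Δ = M₂(x)`. -/
theorem statement15 (G : SimpleGraph V) [DecidableRel G.Adj]
    (d : ℕ) (hd : d = 3 ∨ d = 4 ∨ 19 ≤ d)
    (hG : IsDeltaCritical G) (hmin : ∀ v : V, d ≤ G.degree v)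
    (hmax : (d + 2) ^ (5 * d + 10) ≤ G.maxDegree)
    (X : Finset V) (hXind : ∀ u ∈ X, ∀ v ∈ X, u ≠ v → ¬ G.Adj u v)
    (hXmax : ∀ s : Finset V, (∀ u ∈ s, ∀ v ∈ s, u ≠ v → ¬ G.Adj u v) → s.card ≤ X.card)
    (ω : ℝ) (hω : ((d = 3 ∨ d = 4) ∧ ω = 2) ∨
      (19 ≤ d ∧ ω = (((d : ℝ) - 1) * d) ^ ((1 : ℝ) / 3)))
    (q : ℝ) (hq : q = (((d : ℝ) + 2 - ω) / ((d : ℝ) + 2)) * G.maxDegree)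
    (x : V) (hx : x ∈ X)
    (hdeg : G.degree x = G.maxDegree ∨ (q ≤ (G.degree x : ℝ) ∧ G.degree x < G.maxDegree)) :
    ((d : ℝ) + 2) * G.maxDegree ≤ M2starX G d ω q X x :=
  statement15_general G d hd hmin X hXind ω q x hx hdeg
end

section
/- With the discharging setup below, let ℓ be a nonnegative integer, let x ∈ X^- with k = d(x), let y ∈ N(x) (so y ∈ Y), and assume ℓ ≤ k−2. If σ_q(x,y) ≥ Δ−k+1+ℓ, then in Step 2 the vertex y gives x charge at least h(k,ℓ) = (ωΔ − ℓ·(d+2)ω/(d+2−ω))/(k−ℓ−1). -/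
open Finset

variable {V : Type*}

/-!
The bound comes down to two counts at `y`. Every neighbour of `y` in `X⁻` has degree below `q`,
so `σ_q(x, y) ≥ Δ - k + 1 + ℓ` leaves `b = |N(y) ∩ X⁻| ≤ k - 1 - ℓ`. Vizing's adjacency lemma
gives `y` at least `Δ - k + 1` neighbours of degree `Δ`, none of them in `X⁺ ∪ X⁻`, so
`|N(y) ∩ X⁺| ≤ k - 1 - b`. As `g₁` is decreasing, `y` gives at most `g₁(q)` to each vertex of
`X⁺` in Step 1, so each vertex of `N(y) ∩ X⁻` receives at least `(ωΔ - (k - 1 - b) g₁(q)) / b`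
in Step 2. This decreases in `b` because `(k - 1) g₁(q) < q g₁(q) = ωΔ`, and at `b = k - 1 - ℓ`
it is `h(k, ℓ)`.

Vizing's adjacency lemma is proved via multifans: colour `G - xy` with `Δ` colours; on a maximal
multifan at `y` containing `x`, the free colours of the fan vertices are pairwise disjoint
(Kempe chain swaps) and disjoint from those of `y` (shifting the uncoloured edge along the fan),
so each is the colour of an edge from `y` to the fan. Counting them gives the lemma.
-/

theorem Set.InjOn.update {α β : Type*} [DecidableEq α] {f : α → β} {s : Set α}
    (hf : s.InjOn f) {a : α} {c : β} (hc : ∀ z ∈ s, z ≠ a → f z ≠ c) :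
    s.InjOn (Function.update f a c) := by
  intro z₁ h₁ z₂ h₂ he
  by_cases ha₁ : z₁ = a <;> by_cases ha₂ : z₂ = a
  · exact ha₁.trans ha₂.symm
  · subst ha₁
    simp only [Function.update_self, Function.update_of_ne ha₂] at he
    exact absurd he.symm (hc z₂ h₂ ha₂)
  · subst ha₂
    simp only [Function.update_self, Function.update_of_ne ha₁] at he
    exact absurd he (hc z₁ h₁ ha₁)
  · simp only [Function.update_of_ne ha₁, Function.update_of_ne ha₂] at he
    exact hf h₁ h₂ he

theorem ne_zero_of_mem_Icc {c K : ℕ} (hc : c ∈ Icc 1 K) : c ≠ 0 :=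
  Nat.one_le_iff_ne_zero.1 (Finset.mem_Icc.1 hc).1

theorem swap_apply_mem_Icc {β γ c K : ℕ} (hβ : β ∈ Icc 1 K) (hγ : γ ∈ Icc 1 K) :
    Equiv.swap β γ c ∈ Icc 1 K ↔ c ∈ Icc 1 K := by
  rw [Equiv.swap_apply_def]
  split_ifs with h₁ h₂
  · subst h₁; exact iff_of_true hγ hβ
  · subst h₂; exact iff_of_true hβ hγ
  · rfl

namespace SimpleGraph

variable {W : Type*} [Fintype W] {H : SimpleGraph W} [DecidableRel H.Adj]

/-- A connected graph on `n` vertices has at least `n - 1` edges, so its degree sum is at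
least `2n - 2`. -/
theorem Connected.card_le_two_of_degree_le_one (hH : H.Connected) (hdeg : ∀ v, H.degree v ≤ 2)
    (s : Finset W) (hs : ∀ v ∈ s, H.degree v ≤ 1) : s.card ≤ 2 := by
  classical
  have hedges := hH.card_vert_le_card_edgeSet_add_one
  rw [Nat.card_eq_fintype_card, Nat.card_eq_fintype_card, ← edgeFinset_card] at hedges
  have hsum : ∑ v, (H.degree v + if v ∈ s then 1 else 0) ≤ ∑ _v : W, 2 :=
    sum_le_sum fun v _ => by split_ifs with hv <;> grind
  rw [sum_add_distrib, sum_degrees_eq_twice_card_edges, sum_boole, sum_const, card_univ,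
    filter_mem_eq_inter, univ_inter, smul_eq_mul, Nat.cast_id] at hsum
  omega

theorem not_reachable_of_degree_le_one (hdeg : ∀ v, H.degree v ≤ 2) {a b c : W} (hab : a ≠ b)
    (hac : a ≠ c) (hbc : b ≠ c) (ha : H.degree a ≤ 1) (hb : H.degree b ≤ 1)
    (hc : H.degree c ≤ 1) (hrb : H.Reachable a b) : ¬ H.Reachable a c := by
  classical
  intro hrc
  set C := H.connectedComponentMk a
  have hmem : ∀ v, H.Reachable a v → v ∈ C.supp := fun v h =>
    (ConnectedComponent.mem_supp_iff _ _).2 (ConnectedComponent.eq.2 h.symm)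
  have hdegC : ∀ v (hv : v ∈ C.supp), C.toSimpleGraph.degree ⟨v, hv⟩ = H.degree v := by
    intro v hv
    unfold ConnectedComponent.toSimpleGraph
    convert degree_induce_of_neighborSet_subset (s := C.supp) (v := ⟨v, hv⟩)
      fun w hw => C.mem_supp_of_adj_mem_supp hv hw
    exact Iff.rfl
  have := C.connected_toSimpleGraph.card_le_two_of_degree_le_one
    (fun v => (hdegC v.1 v.2).trans_le (hdeg v))
    {⟨a, hmem a .rfl⟩, ⟨b, hmem b hrb⟩, ⟨c, hmem c hrc⟩}
    (by simp only [mem_insert, mem_singleton]; rintro v (rfl | rfl | rfl) <;> rw [hdegC] <;>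
      assumption)
  rw [card_insert_of_notMem (by simp [hab, hac]), card_pair (by simp [hbc])] at this
  omega

end SimpleGraph

/-- A proper edge colouring of `G - ab` with colours in `[1, K]`, in which the edge `ab` carries
the colour `0`. -/
structure IsNearColoring (G : SimpleGraph V) (K : ℕ) (φ : V → V → ℕ) (a b : V) : Prop where
  adj : G.Adj a b
  comm : ∀ u v, φ u v = φ v u
  uncolored : φ a b = 0
  mem_Icc : ∀ ⦃u v⦄, G.Adj u v → s(u, v) ≠ s(a, b) → φ u v ∈ Icc 1 K
  injOn : ∀ v, Set.InjOn (φ v) (G.neighborSet v)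

namespace IsNearColoring

variable {G : SimpleGraph V} {K : ℕ} {φ : V → V → ℕ} {a b : V}

theorem symm (h : IsNearColoring G K φ a b) : IsNearColoring G K φ b a where
  adj := h.adj.symm
  comm := h.comm
  uncolored := h.comm a b ▸ h.uncolored
  mem_Icc _ _ huv hne := h.mem_Icc huv fun he => hne (he.trans Sym2.eq_swap)
  injOn := h.injOn

theorem apply_ne_zero (h : IsNearColoring G K φ a b) {u v : V} (huv : G.Adj u v)
    (hne : s(u, v) ≠ s(a, b)) : φ u v ≠ 0 :=
  ne_zero_of_mem_Icc (h.mem_Icc huv hne)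

theorem of_deleteEdges (hab : G.Adj a b) (h : IsEdgeColoring (G.deleteEdges {s(a, b)}) K φ) :
    ∃ ψ, IsNearColoring G K ψ a b := by
  classical
  obtain ⟨hcomm, hcol, hinj⟩ := h
  have hdel : ∀ ⦃u v⦄, G.Adj u v → s(u, v) ≠ s(a, b) → (G.deleteEdges {s(a, b)}).Adj u v :=
    fun u v huv hne => SimpleGraph.deleteEdges_adj.2 ⟨huv, hne⟩
  refine ⟨fun u v => if s(u, v) = s(a, b) then 0 else φ u v, hab, fun u v => ?_, by simp,
    fun u v huv hne => ?_, fun v u hu w hw he => ?_⟩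
  · rw [Sym2.eq_swap (a := u), hcomm]
  · rw [if_neg hne]
    exact hcol (hdel huv hne)
  · by_contra huw
    split_ifs at he with h₁ h₂ h₂
    · exact huw (Sym2.congr_right.1 (h₁.trans h₂.symm))
    · exact ne_zero_of_mem_Icc (hcol (hdel hw h₂)) he.symm
    · exact ne_zero_of_mem_Icc (hcol (hdel hu h₁)) he
    · exact hinj (hdel hu h₁) (hdel hw h₂) huw he

end IsNearColoring

section FreeColors

variable [Fintype V] {G : SimpleGraph V} [DecidableRel G.Adj] {K : ℕ} {φ ψ : V → V → ℕ}

variable (G K) in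
def freeColors (φ : V → V → ℕ) (v : V) : Finset ℕ :=
  Icc 1 K \ (G.neighborFinset v).image (φ v)

theorem mem_freeColors {v : V} {c : ℕ} :
    c ∈ freeColors G K φ v ↔ c ∈ Icc 1 K ∧ ∀ u, G.Adj v u → φ v u ≠ c := by
  simp [freeColors]

theorem freeColors_congr {v : V} (h : ∀ u, G.Adj v u → ψ v u = φ v u) :
    freeColors G K ψ v = freeColors G K φ v := by
  ext c
  simp +contextual only [mem_freeColors, h]

theorem mem_freeColors_of_swap {β γ : ℕ} (hβ : β ∈ Icc 1 K) (hγ : γ ∈ Icc 1 K) {v : V}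
    (h : ∀ u, ψ v u = Equiv.swap β γ (φ v u)) {c : ℕ} :
    c ∈ freeColors G K ψ v ↔ Equiv.swap β γ c ∈ freeColors G K φ v := by
  simp only [mem_freeColors, h, swap_apply_mem_Icc hβ hγ, ne_eq, Equiv.swap_apply_eq_iff]

theorem le_card_freeColors_add_degree (φ : V → V → ℕ) (v : V) :
    K ≤ (freeColors G K φ v).card + G.degree v := by
  have := le_card_sdiff ((G.neighborFinset v).image (φ v)) (Icc 1 K)
  have := (G.neighborFinset v).card_image_le (f := φ v)
  simp only [freeColors, Nat.card_Icc, SimpleGraph.card_neighborFinset_eq_degree] at *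
  omega

namespace IsNearColoring

variable {a b : V}

/-- The uncoloured edge contributes the colour `0`, which is not in `[1, K]`. -/
theorem lt_card_freeColors_add_degree (h : IsNearColoring G K φ a b) :
    K < (freeColors G K φ a).card + G.degree a := by
  set img := (G.neighborFinset a).image (φ a)
  have h0 : 0 ∈ img := mem_image.2 ⟨b, (G.mem_neighborFinset a b).2 h.adj, h.uncolored⟩
  have hfree : freeColors G K φ a = Icc 1 K \ img.erase 0 := by
    ext c
    simp only [freeColors, mem_sdiff, mem_erase, Finset.mem_Icc]
    exact ⟨fun ⟨h1, h2⟩ => ⟨h1, fun h => h2 h.2⟩, fun ⟨h1, h2⟩ => ⟨h1, fun h => h2 ⟨by omega, h⟩⟩⟩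
  have hcard := le_card_sdiff (img.erase 0) (Icc 1 K)
  have himg : img.card ≤ G.degree a :=
    card_image_le.trans (G.card_neighborFinset_eq_degree a).le
  have : 0 < img.card := card_pos.2 ⟨0, h0⟩
  rw [card_erase_of_mem h0, Nat.card_Icc] at hcard
  rw [hfree]
  omega

theorem freeColors_subset (hψ : IsNearColoring G K ψ a b) (h : ∀ z, z ≠ a → ψ b z = φ b z) :
    freeColors G K φ b ⊆ freeColors G K ψ b := by
  intro c hc
  rw [mem_freeColors] at hc ⊢
  refine ⟨hc.1, fun z hz => ?_⟩
  by_cases hza : z = a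
  · rw [hza, hψ.comm, hψ.uncolored]
    exact (ne_zero_of_mem_Icc hc.1).symm
  · rw [h z hza]
    exact hc.2 z hz

theorem disjoint_freeColors (hG : ∀ ψ, ¬ IsEdgeColoring G K ψ) (h : IsNearColoring G K φ a b) :
    Disjoint (freeColors G K φ a) (freeColors G K φ b) := by
  rw [Finset.disjoint_left]
  intro c hca hcb
  rw [mem_freeColors] at hca hcb
  classical
  have free_at : ∀ v u w, s(v, u) = s(a, b) → G.Adj v w → φ v w ≠ c := by
    intro v u w he hw
    rcases Sym2.eq_iff.1 he with ⟨rfl, -⟩ | ⟨rfl, -⟩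
    exacts [hca.2 w hw, hcb.2 w hw]
  refine hG (fun u v => if s(u, v) = s(a, b) then c else φ u v) ⟨fun u v => ?_, fun u v huv => ?_,
    fun v u w hu hw huw => ?_⟩ <;> dsimp only
  · rw [Sym2.eq_swap (a := u), h.comm]
  · split_ifs with he
    exacts [hca.1, h.mem_Icc huv he]
  · split_ifs with h1 h2 h2
    · exact absurd (Sym2.congr_right.1 (h1.trans h2.symm)) huw
    · exact (free_at v u w h1 hw).symm
    · exact free_at v w u h2 hu
    · exact fun he => huw (h.injOn v hu hw he)

end IsNearColoring

end FreeColors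

def kempeGraph (G : SimpleGraph V) (φ : V → V → ℕ) (β γ : ℕ) : SimpleGraph V :=
  SimpleGraph.fromRel fun u v => G.Adj u v ∧ (φ u v = β ∨ φ u v = γ)

section Kempe

variable {G : SimpleGraph V} {K : ℕ} {φ : V → V → ℕ} {β γ : ℕ} {a b : V}

theorem kempeGraph_adj (hφ : ∀ u v, φ u v = φ v u) {u v : V} :
    (kempeGraph G φ β γ).Adj u v ↔ G.Adj u v ∧ (φ u v = β ∨ φ u v = γ) := by
  rw [kempeGraph, SimpleGraph.fromRel_adj]
  constructor
  · rintro ⟨-, h | ⟨hvu, hc⟩⟩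
    exacts [h, ⟨hvu.symm, hφ u v ▸ hc⟩]
  · exact fun h => ⟨h.1.ne, Or.inl h⟩

theorem IsNearColoring.exists_kempeSwap (h : IsNearColoring G K φ a b) (hβ : β ∈ Icc 1 K)
    (hγ : γ ∈ Icc 1 K) (l : V) :
    ∃ ψ, IsNearColoring G K ψ a b ∧
      (∀ v, ¬ (kempeGraph G φ β γ).Reachable l v → ∀ u, G.Adj v u → ψ v u = φ v u) ∧
      ∀ v, (kempeGraph G φ β γ).Reachable l v → ∀ u, ψ v u = Equiv.swap β γ (φ v u) := by
  classical
  set S := {v | (kempeGraph G φ β γ).Reachable l v}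
  set σ := Equiv.swap β γ
  have hσ0 : σ 0 = 0 :=
    Equiv.swap_apply_of_ne_of_ne (ne_zero_of_mem_Icc hβ).symm (ne_zero_of_mem_Icc hγ).symm
  have hboundary : ∀ v u, v ∉ S → u ∈ S → G.Adj v u → σ (φ v u) = φ v u := by
    intro v u hv hu hvu
    refine Equiv.swap_apply_of_ne_of_ne (fun hc => hv ?_) (fun hc => hv ?_) <;>
      exact hu.trans ((kempeGraph_adj h.comm).2 ⟨hvu.symm, by rw [h.comm]; tauto⟩).reachable
  let ψ u v := if u ∈ S ∨ v ∈ S then σ (φ u v) else φ u v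
  have hout : ∀ v, v ∉ S → ∀ u, G.Adj v u → ψ v u = φ v u := by
    intro v hv u hvu
    by_cases hu : u ∈ S
    · simp only [ψ, if_pos (Or.inr hu), hboundary v u hv hu hvu]
    · simp only [ψ, if_neg (not_or.2 ⟨hv, hu⟩)]
  have hin : ∀ v, v ∈ S → ∀ u, ψ v u = σ (φ v u) := fun v hv u => if_pos (Or.inl hv)
  refine ⟨ψ, ⟨h.adj, fun u v => ?_, ?_, fun u v huv hne => ?_, fun v => ?_⟩, hout, hin⟩
  · simp only [ψ, or_comm (a := u ∈ S), h.comm u v]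
  · simp only [ψ, h.uncolored, hσ0, ite_self]
  · simp only [ψ]
    split_ifs
    exacts [(swap_apply_mem_Icc hβ hγ).2 (h.mem_Icc huv hne), h.mem_Icc huv hne]
  · by_cases hv : v ∈ S
    · exact (σ.injective.comp_injOn (h.injOn v)).congr fun u _ => (hin v hv u).symm
    · exact (h.injOn v).congr fun u hu => (hout v hv u hu).symm

variable [Fintype V] [DecidableRel G.Adj]

theorem IsNearColoring.degree_kempeGraph_le (h : IsNearColoring G K φ a b)
    [DecidableRel (kempeGraph G φ β γ).Adj] (v : V) :
    (kempeGraph G φ β γ).degree v ≤ (({β, γ} : Finset ℕ) \ freeColors G K φ v).card := by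
  rw [← SimpleGraph.card_neighborFinset_eq_degree]
  refine card_le_card_of_injOn (φ v) (fun u hu => ?_) ((h.injOn v).mono fun u hu => ?_)
  all_goals obtain ⟨hvu, hc⟩ :=
    (kempeGraph_adj h.comm).1 ((SimpleGraph.mem_neighborFinset _ _ _).1 (mem_coe.1 hu))
  · simp only [mem_coe, mem_sdiff, mem_insert, mem_singleton, mem_freeColors, not_and,
      not_forall]
    exact ⟨hc, fun _ => ⟨u, hvu, not_not.2 rfl⟩⟩
  · exact hvu

/-- The three vertices would be ends of a single path component of the Kempe graph. -/
theorem IsNearColoring.not_reachable_kempeGraph (h : IsNearColoring G K φ a b) {u v w : V}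
    (huv : u ≠ v) (huw : u ≠ w) (hvw : v ≠ w)
    (hu : ∃ c ∈ ({β, γ} : Finset ℕ), c ∈ freeColors G K φ u)
    (hv : ∃ c ∈ ({β, γ} : Finset ℕ), c ∈ freeColors G K φ v)
    (hw : ∃ c ∈ ({β, γ} : Finset ℕ), c ∈ freeColors G K φ w)
    (hreach : (kempeGraph G φ β γ).Reachable u v) : ¬ (kempeGraph G φ β γ).Reachable u w := by
  classical
  have hleaf : ∀ t, (∃ c ∈ ({β, γ} : Finset ℕ), c ∈ freeColors G K φ t) →
      (kempeGraph G φ β γ).degree t ≤ 1 := by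
    rintro t ⟨c, hc, hct⟩
    have := card_lt_card ((ssubset_iff_of_subset sdiff_subset).2
      ⟨c, hc, fun h => (mem_sdiff.1 h).2 hct⟩)
    have := card_le_two (a := β) (b := γ)
    have := h.degree_kempeGraph_le (β := β) (γ := γ) t
    omega
  exact SimpleGraph.not_reachable_of_degree_le_one
    (fun t => (h.degree_kempeGraph_le t).trans ((card_le_card sdiff_subset).trans card_le_two))
    huv huw hvw (hleaf u hu) (hleaf v hv) (hleaf w hw) hreach

end Kempe

/-- Exchanges the colours of the edges `av` and `aw`, leaving all other edges alone. -/
def shiftAt [DecidableEq V] (φ : V → V → ℕ) (a v w : V) : V → V → ℕ :=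
  fun u z => if u = a then φ a (Equiv.swap v w z) else if z = a then φ a (Equiv.swap v w u)
    else φ u z

section Shift

variable [DecidableEq V] {G : SimpleGraph V} {K : ℕ} {φ : V → V → ℕ} {a v w : V}

theorem shiftAt_self_apply (z : V) : shiftAt φ a v w a z = φ a (Equiv.swap v w z) := if_pos rfl

theorem shiftAt_of_ne {u : V} (hu : u ≠ a) :
    shiftAt φ a v w u = Function.update (φ u) a (φ a (Equiv.swap v w u)) := by
  funext z
  by_cases hz : z = a
  · subst hz; simp [shiftAt, hu]
  · simp [shiftAt, hu, hz]

theorem shiftAt_apply_of_ne {u z : V} (hu : u ≠ a) (hz : z ≠ a) :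
    shiftAt φ a v w u z = φ u z := by
  rw [shiftAt_of_ne hu, Function.update_of_ne hz]

theorem adj_swap_apply (hav : G.Adj a v) (haw : G.Adj a w) {z : V} (hz : G.Adj a z) :
    G.Adj a (Equiv.swap v w z) := by
  rw [Equiv.swap_apply_def]
  split_ifs
  exacts [haw, hav, hz]

section

variable [Fintype V] [DecidableRel G.Adj]

theorem IsNearColoring.injOn_shiftAt (h : IsNearColoring G K φ a w) (hav : G.Adj a v)
    (hvw : v ≠ w) (hfree : φ a v ∈ freeColors G K φ w) (u : V) :
    Set.InjOn (shiftAt φ a v w u) (G.neighborSet u) := by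
  by_cases hua : u = a
  · subst hua
    exact ((h.injOn u).comp (Equiv.swap v w).injective.injOn
      fun z => adj_swap_apply hav h.adj).congr fun z _ => (shiftAt_self_apply z).symm
  rw [shiftAt_of_ne hua]
  by_cases huv : u = v
  · subst huv
    refine (h.injOn u).update fun z hz hza => ?_
    rw [Equiv.swap_apply_left, h.uncolored]
    exact h.apply_ne_zero hz fun he => by
      rcases Sym2.eq_iff.1 he with ⟨hu, -⟩ | ⟨hu, -⟩ <;> contradiction
  by_cases huw : u = w
  · subst huw
    refine (h.injOn u).update fun z hz _ => ?_
    rw [Equiv.swap_apply_right]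
    exact (mem_freeColors.1 hfree).2 z hz
  rw [Equiv.swap_apply_of_ne_of_ne huv huw, h.comm, Function.update_eq_self]
  exact h.injOn u

theorem IsNearColoring.shiftAt (h : IsNearColoring G K φ a w) (hav : G.Adj a v) (hvw : v ≠ w)
    (hfree : φ a v ∈ freeColors G K φ w) : IsNearColoring G K (shiftAt φ a v w) a v := by
  have hcolA : ∀ z, G.Adj a z → z ≠ v → φ a (Equiv.swap v w z) ∈ Icc 1 K := by
    intro z hz hzv
    refine h.mem_Icc (adj_swap_apply hav h.adj hz) fun he => hzv ?_
    rw [← (Equiv.swap v w).symm_apply_apply z, Sym2.congr_right.1 he]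
    exact Equiv.swap_apply_right v w
  refine ⟨hav, fun u z => ?_, ?_, fun u z huz hne => ?_, h.injOn_shiftAt hav hvw hfree⟩
  · simp only [_root_.shiftAt]
    split_ifs <;> simp_all [h.comm]
  · simp [shiftAt_self_apply, h.uncolored]
  by_cases hua : u = a
  · subst hua
    rw [shiftAt_self_apply]
    exact hcolA z huz fun hzv => hne (hzv ▸ rfl)
  by_cases hza : z = a
  · subst hza
    rw [shiftAt_of_ne hua, Function.update_self]
    exact hcolA u huz.symm fun huv => hne (by rw [huv, Sym2.eq_swap])
  rw [shiftAt_apply_of_ne hua hza]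
  exact h.mem_Icc huz fun he => by
    rcases Sym2.eq_iff.1 he with ⟨hu, -⟩ | ⟨-, hz⟩ <;> contradiction

theorem freeColors_shiftAt (hav : G.Adj a v) (haw : G.Adj a w) :
    freeColors G K (shiftAt φ a v w) a = freeColors G K φ a := by
  ext c
  simp only [mem_freeColors, shiftAt_self_apply]
  refine and_congr_right fun _ => ⟨fun H z hz => ?_, fun H z hz => H _ (adj_swap_apply hav haw hz)⟩
  simpa using H _ (adj_swap_apply hav haw hz)

end

end Shift

/-- A multifan at `y` with respect to the uncoloured edge `yx`, listed from the most recently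
added vertex back to `x`: each new vertex `v` is a neighbour of `y` such that the colour of `yv`
is free at some earlier vertex. -/
inductive IsMultifan [Fintype V] (G : SimpleGraph V) [DecidableRel G.Adj] (K : ℕ)
    (φ : V → V → ℕ) (y x : V) : List V → Prop
  | single : IsMultifan G K φ y x [x]
  | cons {v : V} {L : List V} : IsMultifan G K φ y x L → v ∉ L → G.Adj y v →
      (∃ w ∈ L, φ y v ∈ freeColors G K φ w) → IsMultifan G K φ y x (v :: L)

namespace IsMultifan

variable [Fintype V] {G : SimpleGraph V} [DecidableRel G.Adj] {K : ℕ} {φ : V → V → ℕ}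
  {y x : V} {L : List V}

theorem mem_self (hL : IsMultifan G K φ y x L) : x ∈ L := by
  induction hL with
  | single => exact List.mem_singleton_self x
  | cons _ _ _ _ ih => exact List.mem_cons_of_mem _ ih

theorem adj (hL : IsMultifan G K φ y x L) (hyx : G.Adj y x) {v : V} (hv : v ∈ L) :
    G.Adj y v := by
  induction hL with
  | single => exact List.mem_singleton.1 hv ▸ hyx
  | cons _ _ hyv _ ih => exact (List.mem_cons.1 hv).elim (· ▸ hyv) ih

theorem nodup (hL : IsMultifan G K φ y x L) : L.Nodup := by
  induction hL with
  | single => exact List.nodup_singleton x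
  | cons _ hv _ _ ih => exact List.nodup_cons.2 ⟨hv, ih⟩

theorem exists_maximal (x : V) : ∃ L, IsMultifan G K φ y x L ∧
    ∀ v ∉ L, G.Adj y v → ∀ w ∈ L, φ y v ∉ freeColors G K φ w := by
  by_contra! hext
  have long : ∀ n, ∃ L, IsMultifan G K φ y x L ∧ n < L.length := by
    intro n
    induction n with
    | zero => exact ⟨[x], single, by simp⟩
    | succ n ih =>
      obtain ⟨L, hL, hn⟩ := ih
      obtain ⟨v, hv, hyv, w, hw, hc⟩ := hext L hL
      exact ⟨v :: L, hL.cons hv hyv ⟨w, hw, hc⟩, by simp; omega⟩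
  obtain ⟨L, hL, hn⟩ := long (Fintype.card V)
  exact hn.not_ge hL.nodup.length_le_card

theorem exists_nearColoring (hφ : IsNearColoring G K φ y x) (hL : IsMultifan G K φ y x L) :
    ∀ v ∈ L, ∃ ψ, IsNearColoring G K ψ y v ∧ freeColors G K ψ y = freeColors G K φ y ∧
      (∀ u z, u ≠ y → z ≠ y → ψ u z = φ u z) ∧ ∀ u ∉ L, ψ y u = φ y u := by
  classical
  induction hL with
  | single =>
    intro v hv
    obtain rfl := List.mem_singleton.1 hv
    exact ⟨φ, hφ, rfl, fun _ _ _ _ => rfl, fun _ _ => rfl⟩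
  | @cons v L hL hvL hyv hfree ih =>
    intro v' hv'
    rcases List.mem_cons.1 hv' with rfl | hv'
    · obtain ⟨w, hwL, hcw⟩ := hfree
      obtain ⟨ψ, hψ, hfr, hoff, hout⟩ := ih w hwL
      have hvw : v' ≠ w := fun h => hvL (h ▸ hwL)
      have hsub := hψ.freeColors_subset fun z hz => hoff w z (hL.adj hφ.adj hwL).ne.symm hz
      refine ⟨shiftAt ψ y v' w, hψ.shiftAt hyv hvw (hout v' hvL ▸ hsub hcw),
        (freeColors_shiftAt hyv hψ.adj).trans hfr, fun u z hu hz => ?_, fun u hu => ?_⟩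
      · rw [shiftAt_apply_of_ne hu hz, hoff u z hu hz]
      · have hu' := List.ne_and_not_mem_of_not_mem_cons hu
        rw [shiftAt_self_apply, Equiv.swap_apply_of_ne_of_ne hu'.1
          fun h => hu'.2 (h ▸ hwL), hout u hu'.2]
    · obtain ⟨ψ, hψ, hfr, hoff, hout⟩ := ih v' hv'
      exact ⟨ψ, hψ, hfr, hoff, fun u hu => hout u fun h => hu (List.mem_cons_of_mem _ h)⟩

theorem disjoint_freeColors_center (hG : ∀ ψ, ¬ IsEdgeColoring G K ψ)
    (hφ : IsNearColoring G K φ y x) (hL : IsMultifan G K φ y x L) {v : V} (hv : v ∈ L) :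
    Disjoint (freeColors G K φ y) (freeColors G K φ v) := by
  obtain ⟨ψ, hψ, hfr, hoff, -⟩ := hL.exists_nearColoring hφ v hv
  have hsub := hψ.freeColors_subset fun z hz => hoff v z (hL.adj hφ.adj hv).ne.symm hz
  rw [← hfr]
  exact (hψ.disjoint_freeColors hG).mono_right hsub

theorem of_recolor {ψ : V → V → ℕ} {β γ : ℕ} (hL : IsMultifan G K φ y x L)
    (hy : ∀ z, G.Adj y z → ψ y z = φ y z) (hβ : β ∈ freeColors G K φ y)
    (hfr : ∀ w, freeColors G K ψ w = freeColors G K φ w ∨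
      ∀ c, c ∈ freeColors G K ψ w ↔ Equiv.swap β γ c ∈ freeColors G K φ w) :
    IsMultifan G K ψ y x L ∨
      ∃ L', IsMultifan G K ψ y x L' ∧ ∃ w ∈ L', β ∈ freeColors G K ψ w := by
  induction hL with
  | single => exact Or.inl .single
  | @cons v L _ hvL hyv hfree ih =>
    refine ih.elim (fun hL' => ?_) Or.inr
    obtain ⟨w, hwL, hcw⟩ := hfree
    have hvβ : φ y v ≠ β := (mem_freeColors.1 hβ).2 v hyv
    rcases hfr w with heq | hswap
    · exact Or.inl (hL'.cons hvL hyv ⟨w, hwL, by rwa [hy v hyv, heq]⟩)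
    by_cases hvγ : φ y v = γ
    · exact Or.inr ⟨L, hL', w, hwL, (hswap β).2 (by rwa [Equiv.swap_apply_left, ← hvγ])⟩
    · refine Or.inl (hL'.cons hvL hyv ⟨w, hwL, ?_⟩)
      rwa [hy v hyv, hswap, Equiv.swap_apply_of_ne_of_ne hvβ hvγ]

/-- Two vertices sharing a free colour `γ`, together with `y` and a colour `β` free at `y`, would
be three ends of `(β, γ)`-Kempe chains; one of the two is not on the chain through `y`, and
swapping its chain makes `β` free at `y` and at a vertex of a multifan. -/
theorem disjoint_freeColors (hG : ∀ ψ, ¬ IsEdgeColoring G K ψ) (hφ : IsNearColoring G K φ y x)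
    (hy : G.degree y ≤ K) (hL : IsMultifan G K φ y x L) {u v : V} (hu : u ∈ L) (hv : v ∈ L)
    (huv : u ≠ v) : Disjoint (freeColors G K φ u) (freeColors G K φ v) := by
  rw [Finset.disjoint_left]
  intro γ hγu hγv
  obtain ⟨β, hβ⟩ : (freeColors G K φ y).Nonempty := by
    have := hφ.lt_card_freeColors_add_degree
    exact card_pos.1 (by omega)
  have hβI := (mem_freeColors.1 hβ).1
  have hγI := (mem_freeColors.1 hγu).1
  obtain ⟨l, hlL, hγl, hyl⟩ :
      ∃ l ∈ L, γ ∈ freeColors G K φ l ∧ ¬ (kempeGraph G φ β γ).Reachable l y := by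
    by_contra! hall
    exact hφ.not_reachable_kempeGraph (hL.adj hφ.adj hu).ne (hL.adj hφ.adj hv).ne huv
      ⟨β, by simp, hβ⟩ ⟨γ, by simp, hγu⟩ ⟨γ, by simp, hγv⟩ (hall u hu hγu).symm
      (hall v hv hγv).symm
  obtain ⟨ψ, hψ, hout, hin⟩ := hφ.exists_kempeSwap hβI hγI l
  have hyψ : ∀ z, G.Adj y z → ψ y z = φ y z := hout y hyl
  have hfr : ∀ w, freeColors G K ψ w = freeColors G K φ w ∨
      ∀ c, c ∈ freeColors G K ψ w ↔ Equiv.swap β γ c ∈ freeColors G K φ w := fun w =>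
    (em ((kempeGraph G φ β γ).Reachable l w)).symm.imp (fun hw => freeColors_congr (hout w hw))
      fun hw _ => mem_freeColors_of_swap hβI hγI (hin w hw)
  have hβl : β ∈ freeColors G K ψ l := by
    rwa [mem_freeColors_of_swap hβI hγI (hin l .rfl), Equiv.swap_apply_left]
  obtain ⟨L', hL', w, hwL', hβw⟩ := (hL.of_recolor hyψ hβ hfr).elim
    (fun h => ⟨L, h, l, hlL, hβl⟩) id
  exact disjoint_left.1 (hL'.disjoint_freeColors_center hG hψ hwL')
    (freeColors_congr hyψ ▸ hβ) hβw

theorem biUnion_freeColors_subset [DecidableEq V] (hG : ∀ ψ, ¬ IsEdgeColoring G K ψ)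
    (hφ : IsNearColoring G K φ y x) (hL : IsMultifan G K φ y x L)
    (hmax : ∀ v ∉ L, G.Adj y v → ∀ w ∈ L, φ y v ∉ freeColors G K φ w) :
    L.toFinset.biUnion (freeColors G K φ) ⊆ (L.toFinset.erase x).image (φ y) := by
  intro c hc
  obtain ⟨w, hwL, hcw⟩ := mem_biUnion.1 hc
  rw [List.mem_toFinset] at hwL
  have hcy : c ∉ freeColors G K φ y :=
    fun hcy => disjoint_left.1 (hL.disjoint_freeColors_center hG hφ hwL) hcy hcw
  simp only [mem_freeColors, (mem_freeColors.1 hcw).1, true_and, not_forall, not_not] at hcy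
  obtain ⟨z, hyz, rfl⟩ := hcy
  have hzL : z ∈ L := by_contra fun hzL => hmax z hzL hyz w hwL hcw
  have hzx : z ≠ x := fun h => by
    rw [h, hφ.uncolored] at hcw
    exact ne_zero_of_mem_Icc (mem_freeColors.1 hcw).1 rfl
  exact mem_image.2 ⟨z, mem_erase.2 ⟨hzx, List.mem_toFinset.2 hzL⟩, rfl⟩

end IsMultifan

/-- Vizing's adjacency lemma. The free colours at the vertices of a maximal multifan are disjoint
and are colours of edges from `y` to the fan other than `yx`; a fan vertex of degree below `K` has
a free colour, and `x` has at least `K + 1 - d(x)`. -/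
theorem IsNearColoring.lt_degree_add_card [Fintype V] {G : SimpleGraph V} [DecidableRel G.Adj]
    {K : ℕ} {φ : V → V → ℕ} {y x : V} (hG : ∀ ψ, ¬ IsEdgeColoring G K ψ)
    (hφ : IsNearColoring G K φ y x) (hdeg : ∀ v, G.degree v ≤ K) :
    K < G.degree x + ((G.neighborFinset y).filter fun z => G.degree z = K).card := by
  classical
  obtain ⟨L, hL, hmax⟩ := IsMultifan.exists_maximal (G := G) (K := K) (φ := φ) (y := y) x
  set F := L.toFinset
  have hxF : x ∈ F := List.mem_toFinset.2 hL.mem_self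
  have hfan : ∑ v ∈ F, (freeColors G K φ v).card ≤ (F.erase x).card := by
    rw [← card_biUnion fun u hu v hv huv => hL.disjoint_freeColors hG hφ (hdeg y)
      (List.mem_toFinset.1 hu) (List.mem_toFinset.1 hv) huv]
    exact (card_le_card (hL.biUnion_freeColors_subset hG hφ hmax)).trans card_image_le
  have hrest : (F.erase x).card ≤ ∑ v ∈ F.erase x, (freeColors G K φ v).card +
      ((F.erase x).filter fun z => G.degree z = K).card := by
    rw [card_filter, ← sum_add_distrib, card_eq_sum_ones]
    refine sum_le_sum fun v _ => ?_
    have := le_card_freeColors_add_degree (G := G) (K := K) φ v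
    have := hdeg v
    split_ifs <;> omega
  have hdegK : ((F.erase x).filter fun z => G.degree z = K).card ≤
      ((G.neighborFinset y).filter fun z => G.degree z = K).card :=
    card_le_card (filter_subset_filter _ fun v hv => (G.mem_neighborFinset y v).2
      (hL.adj hφ.adj (List.mem_toFinset.1 (mem_of_mem_erase hv))))
  have hx := hφ.symm.lt_card_freeColors_add_degree
  rw [← add_sum_erase F _ hxF] at hfan
  omega

section Critical

variable {G : SimpleGraph V} {K : ℕ}

theorem IsEdgeColoring.mono {H : SimpleGraph V} {φ : V → V → ℕ} (hHG : H ≤ G)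
    (h : IsEdgeColoring G K φ) : IsEdgeColoring H K φ :=
  ⟨h.1, fun _ _ huv => h.2.1 (hHG huv), fun _ _ _ ha hb => h.2.2 (hHG ha) (hHG hb)⟩

theorem exists_isEdgeColoring_chromIndex (h : ∃ k φ, IsEdgeColoring G k φ) :
    ∃ φ, IsEdgeColoring G (chromIndex G) φ :=
  Nat.sInf_mem h

variable [Fintype V] [DecidableRel G.Adj]

theorem IsDeltaCritical.not_isEdgeColoring_s16 (hG : IsDeltaCritical G) (φ : V → V → ℕ) :
    ¬ IsEdgeColoring G G.maxDegree φ := fun hφ => by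
  have := Nat.sInf_le (s := {k | ∃ φ, IsEdgeColoring G k φ}) ⟨φ, hφ⟩
  rw [← chromIndex, hG.2.1] at this
  omega

theorem IsDeltaCritical.exists_isNearColoring (hG : IsDeltaCritical G) {a b : V}
    (hab : G.Adj a b) : ∃ φ, IsNearColoring G G.maxDegree φ a b := by
  have hcol : ∃ k φ, IsEdgeColoring G k φ := by
    by_contra hnone
    have hempty : {k | ∃ φ, IsEdgeColoring G k φ} = ∅ :=
      Set.eq_empty_of_forall_notMem fun k ⟨φ, hφ⟩ => hnone ⟨k, φ, hφ⟩
    have := hG.2.1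
    rw [chromIndex, hempty, Nat.sInf_empty] at this
    omega
  obtain ⟨k, φ, hφ⟩ := hcol
  obtain ⟨ψ, hψ⟩ := exists_isEdgeColoring_chromIndex
    ⟨k, φ, hφ.mono (G.deleteEdges_le {s(a, b)})⟩
  rw [hG.2.2 _ (G.mem_edgeSet.2 hab)] at hψ
  exact IsNearColoring.of_deleteEdges hab hψ

theorem IsDeltaCritical.lt_degree_add_card (hG : IsDeltaCritical G) {x y : V}
    (hxy : G.Adj x y) : G.maxDegree < G.degree x +
      ((G.neighborFinset y).filter fun z => G.degree z = G.maxDegree).card := by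
  obtain ⟨φ, hφ⟩ := hG.exists_isNearColoring hxy.symm
  exact hφ.lt_degree_add_card hG.not_isEdgeColoring_s16 G.degree_le_maxDegree

end Critical

theorem omega_pos_and_lt {d : ℕ} {ω : ℝ} (hω : ((d = 3 ∨ d = 4) ∧ ω = 2) ∨
    (19 ≤ d ∧ ω = (((d : ℝ) - 1) * d) ^ ((1 : ℝ) / 3))) : 0 < ω ∧ ω < d + 2 := by
  rcases hω with ⟨hd, rfl⟩ | ⟨hd, rfl⟩
  · have : (3 : ℝ) ≤ d := by exact_mod_cast (show 3 ≤ d by omega)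
    exact ⟨two_pos, by linarith⟩
  have hd : (19 : ℝ) ≤ d := by exact_mod_cast hd
  have hcube : ((d : ℝ) - 1) * d ≤ d ^ 3 := by
    nlinarith [mul_le_mul_of_nonneg_left hd (sq_nonneg (d : ℝ))]
  refine ⟨Real.rpow_pos_of_pos (by nlinarith) _, ?_⟩
  calc (((d : ℝ) - 1) * d) ^ ((1 : ℝ) / 3) ≤ ((d : ℝ) ^ 3) ^ ((3 : ℕ)⁻¹ : ℝ) := by
        rw [one_div, Nat.cast_ofNat]
        exact Real.rpow_le_rpow (by nlinarith) hcube (by norm_num)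
    _ = d := Real.pow_rpow_inv_natCast (by linarith) (by norm_num)
    _ < d + 2 := by linarith

theorem threshold_pos_and_le {d : ℕ} {ω Δ q : ℝ} (hω0 : 0 < ω) (hωd : ω < d + 2) (hΔ : 0 < Δ)
    (hq : q = (d + 2 - ω) / (d + 2) * Δ) : 0 < q ∧ q ≤ Δ := by
  subst hq
  exact ⟨mul_pos (div_pos (by linarith) (by positivity)) hΔ,
    mul_le_of_le_one_left hΔ.le ((div_le_one (by positivity)).2 (by linarith))⟩

theorem g1_le_g1 (d : ℕ) {Δ s t : ℝ} (hΔ : 0 ≤ Δ) (hs : 0 < s) (hst : s ≤ t) :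
    g1 d Δ t ≤ g1 d Δ s := by
  unfold g1
  rw [div_le_div_iff₀ (hs.trans_le hst) hs]
  nlinarith [mul_nonneg (mul_nonneg (by positivity : (0 : ℝ) ≤ d + 2) hΔ) (sub_nonneg.2 hst)]

theorem g1_threshold (d : ℕ) {Δ ω : ℝ} (hΔ : Δ ≠ 0) (hω : ω ≠ d + 2) :
    g1 d Δ ((d + 2 - ω) / (d + 2) * Δ) = (d + 2) * ω / (d + 2 - ω) := by
  have : (d : ℝ) + 2 - ω ≠ 0 := sub_ne_zero.2 hω.symm
  unfold g1
  field_simp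
  ring

theorem div_le_div_of_le_sub_mul {t c m l b M : ℝ} (hb : 0 < b) (hbm : b ≤ m - l)
    (hcm : c * m ≤ t) (hM : t - (m - b) * c ≤ M) : (t - l * c) / (m - l) ≤ M / b := by
  calc (t - l * c) / (m - l) ≤ (t - (m - b) * c) / b := by
        rw [div_le_div_iff₀ (hb.trans_le hbm) hb]
        nlinarith [mul_nonneg (sub_nonneg.2 hbm) (sub_nonneg.2 hcm)]
    _ ≤ M / b := div_le_div_of_nonneg_right hM hb.le

section Discharging

-- `Xp`, `Xm`, `M1star` and `step2` were elaborated with classical decidability instances.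
open scoped Classical

variable [Fintype V] {G : SimpleGraph V} [DecidableRel G.Adj] {d : ℕ} {ω q : ℝ} {X : Finset V}

theorem card_inter_Xm_add_sigmaq_le (x y : V) :
    (G.neighborFinset y ∩ Xm G d q X).card + sigmaq G q x y ≤ G.degree y := by
  rw [sigmaq, ← card_union_of_disjoint, ← G.card_neighborFinset_eq_degree]
  · exact card_le_card (union_subset inter_subset_left (filter_subset _ _))
  · refine disjoint_left.2 fun u hu hu' => ?_
    have := (mem_filter.1 (mem_inter.1 hu).2).2.2
    have := (mem_filter.1 hu').2.2
    linarith

theorem card_inter_Xp_add_card_inter_Xm_add_le (hq : q ≤ G.maxDegree) (y : V) :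
    (G.neighborFinset y ∩ Xp G q X).card + (G.neighborFinset y ∩ Xm G d q X).card +
      ((G.neighborFinset y).filter fun z => G.degree z = G.maxDegree).card ≤ G.degree y := by
  rw [← card_union_of_disjoint, ← card_union_of_disjoint, ← G.card_neighborFinset_eq_degree]
  · exact card_le_card (union_subset (union_subset inter_subset_left inter_subset_left)
      (filter_subset _ _))
  · refine disjoint_left.2 fun u hu hu' => ?_
    have hΔ := (mem_filter.1 hu').2
    rcases mem_union.1 hu with hu | hu
    · exact (mem_filter.1 (mem_inter.1 hu).2).2.2.ne hΔ
    · have := (mem_filter.1 (mem_inter.1 hu).2).2.2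
      rw [hΔ] at this
      linarith
  · refine disjoint_left.2 fun u hu hu' => ?_
    have := (mem_filter.1 (mem_inter.1 hu).2).2.1
    have := (mem_filter.1 (mem_inter.1 hu').2).2.2
    linarith

theorem IsDeltaCritical.card_inter_Xp_add_card_inter_Xm_lt (hG : IsDeltaCritical G) {x y : V}
    (hxy : G.Adj x y) (hq : q ≤ G.maxDegree) :
    (G.neighborFinset y ∩ Xp G q X).card + (G.neighborFinset y ∩ Xm G d q X).card <
      G.degree x := by
  have := hG.lt_degree_add_card hxy
  have := card_inter_Xp_add_card_inter_Xm_add_le (d := d) (X := X) hq y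
  have := G.degree_le_maxDegree y
  omega

theorem sub_card_mul_le_M1star {y : V} (hq : 0 < q) (hΔ : 0 < G.maxDegree) (hω : ω ≠ d + 2)
    (hqΔ : q = (d + 2 - ω) / (d + 2) * G.maxDegree) :
    ω * G.maxDegree - (G.neighborFinset y ∩ Xp G q X).card * ((d + 2) * ω / (d + 2 - ω)) ≤
      M1star G d ω q X y := by
  rw [M1star, ← g1_threshold d (Nat.cast_ne_zero.2 hΔ.ne') hω, ← hqΔ, ← nsmul_eq_mul]
  refine sub_le_sub_left (sum_le_card_nsmul _ _ _ fun u hu => ?_) _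
  exact g1_le_g1 d (Nat.cast_nonneg _) hq (mem_filter.1 (mem_inter.1 hu).2).2.1

theorem div_le_step2 {x y : V} {t c k l : ℝ} (hxy : x ∈ G.neighborFinset y ∩ Xm G d q X)
    (hc : 0 < c) (hck : c * (k - 1) ≤ t)
    (hBl : ((G.neighborFinset y ∩ Xm G d q X).card : ℝ) ≤ k - 1 - l)
    (hAB : ((G.neighborFinset y ∩ Xp G q X).card + (G.neighborFinset y ∩ Xm G d q X).card : ℝ)
      ≤ k - 1)
    (hM : t - (G.neighborFinset y ∩ Xp G q X).card * c ≤ M1star G d ω q X y) :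
    (t - l * c) / (k - l - 1) ≤ step2 G d ω q X y := by
  have hB : (1 : ℝ) ≤ (G.neighborFinset y ∩ Xm G d q X).card := by
    exact_mod_cast card_pos.2 ⟨x, hxy⟩
  have hM' : t - (k - 1 - (G.neighborFinset y ∩ Xm G d q X).card) * c ≤ M1star G d ω q X y :=
    le_trans (by nlinarith) hM
  rw [step2, if_pos ⟨by nlinarith, ⟨x, hxy⟩⟩, show k - l - 1 = k - 1 - l by ring]
  exact div_le_div_of_le_sub_mul (by linarith) hBl hck hM'

end Discharging

variable [Fintype V]

theorem statement16_general (G : SimpleGraph V) [DecidableRel G.Adj]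
    (d : ℕ)
    (hG : IsDeltaCritical G)
    (X : Finset V)
    (ω : ℝ) (hω : ((d = 3 ∨ d = 4) ∧ ω = 2) ∨
      (19 ≤ d ∧ ω = (((d : ℝ) - 1) * d) ^ ((1 : ℝ) / 3)))
    (q : ℝ) (hq : q = (((d : ℝ) + 2 - ω) / ((d : ℝ) + 2)) * G.maxDegree)
    (x y : V) (hx : x ∈ Xm G d q X) (hadj : G.Adj x y)
    (ℓ : ℕ)
    (hσ : (G.maxDegree : ℝ) - G.degree x + 1 + ℓ ≤ (sigmaq G q x y : ℝ)) :
    (ω * G.maxDegree - ℓ * (((d : ℝ) + 2) * ω / ((d : ℝ) + 2 - ω))) /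
        ((G.degree x : ℝ) - ℓ - 1) ≤ step2 G d ω q X y := by
  classical
  obtain ⟨hω0, hωd⟩ := omega_pos_and_lt hω
  have hΔ : 0 < G.maxDegree :=
    ((G.degree_pos_iff_exists_adj x).2 ⟨y, hadj⟩).trans_le (G.degree_le_maxDegree x)
  obtain ⟨hq0, hqΔ⟩ := threshold_pos_and_le hω0 hωd (by exact_mod_cast hΔ) hq
  have hcq : ((d : ℝ) + 2) * ω / (d + 2 - ω) * q = ω * G.maxDegree := by
    have := (sub_pos.2 hωd).ne'
    rw [hq]
    field_simp
  have hkq : (G.degree x : ℝ) < q := (mem_filter.1 hx).2.2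
  have hAB := hG.card_inter_Xp_add_card_inter_Xm_lt (X := X) (d := d) hadj hqΔ
  have hBσ := (card_inter_Xm_add_sigmaq_le (G := G) (d := d) (q := q) (X := X) x y).trans
    (G.degree_le_maxDegree y)
  refine div_le_step2 (mem_inter.2 ⟨(G.mem_neighborFinset y x).2 hadj.symm, hx⟩)
    (div_pos (by positivity) (by linarith)) ?_ ?_ ?_ (sub_card_mul_le_M1star hq0 hΔ hωd.ne hq)
  · nlinarith [div_pos (by positivity : (0 : ℝ) < (d + 2) * ω) (sub_pos.2 hωd)]
  · have := (Nat.cast_le (α := ℝ)).2 hBσ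
    push_cast at this
    linarith
  · have := (Nat.cast_le (α := ℝ)).2 hAB
    push_cast at this
    linarith

/-- Discharging setup as in the paper. Let `ℓ` be a nonnegative integer, let `x ∈ X⁻` with
`k = d(x)`, let `y ∈ N(x)`, and assume `ℓ ≤ k - 2`. If `σ_q(x,y) ≥ Δ - k + 1 + ℓ`, then in
Step 2 the vertex `y` gives `x` charge at least
`h(k,ℓ) = (ωΔ - ℓ(d+2)ω/(d+2-ω))/(k-ℓ-1)`. -/
theorem statement16 (G : SimpleGraph V) [DecidableRel G.Adj]
    (d : ℕ) (hd : d = 3 ∨ d = 4 ∨ 19 ≤ d)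
    (hG : IsDeltaCritical G) (hmin : ∀ v : V, d ≤ G.degree v)
    (hmax : (d + 2) ^ (5 * d + 10) ≤ G.maxDegree)
    (X : Finset V) (hXind : ∀ u ∈ X, ∀ v ∈ X, u ≠ v → ¬ G.Adj u v)
    (hXmax : ∀ s : Finset V, (∀ u ∈ s, ∀ v ∈ s, u ≠ v → ¬ G.Adj u v) → s.card ≤ X.card)
    (ω : ℝ) (hω : ((d = 3 ∨ d = 4) ∧ ω = 2) ∨
      (19 ≤ d ∧ ω = (((d : ℝ) - 1) * d) ^ ((1 : ℝ) / 3)))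
    (q : ℝ) (hq : q = (((d : ℝ) + 2 - ω) / ((d : ℝ) + 2)) * G.maxDegree)
    (x y : V) (hx : x ∈ Xm G d q X) (hadj : G.Adj x y)
    (ℓ : ℕ) (hℓ : (ℓ : ℝ) ≤ (G.degree x : ℝ) - 2)
    (hσ : (G.maxDegree : ℝ) - G.degree x + 1 + ℓ ≤ (sigmaq G q x y : ℝ)) :
    (ω * G.maxDegree - ℓ * (((d : ℝ) + 2) * ω / ((d : ℝ) + 2 - ω))) /
        ((G.degree x : ℝ) - ℓ - 1) ≤ step2 G d ω q X y :=
  statement16_general G d hG X ω hω q hq x y hx hadj ℓ hσ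
end
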